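/- arXiv:1807.00411 — 8 statements merged into one kernel-verified Lean document; each statement's English description precedes it below -/
import Mathlib

section
/- For every positive integer n, every primitive n-th root of unity ζ_n in ℂ, and every integer r with 1 ≤ r ≤ n-1, one has z_n({1}^r; ζ_n) = (1/n) · binom(n, r+1) · (1-ζ_n)^r, where {1}^r denotes the index (1,1,...,1) of depth r. (For r ≥ n the sum z_n({1}^r; ζ_n) is empty and equals 0, consistent with binom(n,r+1) = 0.) -/
open Finset

/-- The set of tuples `(m_1,...,m_r)` with `n > m_1 > m_2 > ... > m_r > 0`. -/
def msets (n r : ℕ) : Finset (Fin r → Fin n) :=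
  Finset.univ.filter fun m =>
    (∀ i j : Fin r, i < j → m j < m i) ∧ ∀ i, 0 < (m i : ℕ)

/-- The set of tuples `(m_1,...,m_r)` with `n > m_1 ≥ m_2 ≥ ... ≥ m_r > 0`. -/
def msetsStar (n r : ℕ) : Finset (Fin r → Fin n) :=
  Finset.univ.filter fun m =>
    (∀ i j : Fin r, i ≤ j → m j ≤ m i) ∧ ∀ i, 0 < (m i : ℕ)

/-- The finite multiple harmonic q-series
`z_n(k_1,…,k_r; q) = Σ_{n > m_1 > … > m_r > 0} Π_i q^{(k_i-1)m_i}/[m_i]_q^{k_i}`,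
where `[m]_q = (1-q^m)/(1-q)`. -/
noncomputable def z (n : ℕ) {r : ℕ} (k : Fin r → ℕ) (q : ℂ) : ℂ :=
  ∑ m ∈ msets n r,
    ∏ i, q ^ ((k i - 1) * (m i : ℕ)) / ((1 - q ^ (m i : ℕ)) / (1 - q)) ^ (k i)

/-- The star version `z*_n(k; q)`, summed over `n > m_1 ≥ … ≥ m_r > 0`. -/
noncomputable def zstar (n : ℕ) {r : ℕ} (k : Fin r → ℕ) (q : ℂ) : ℂ :=
  ∑ m ∈ msetsStar n r,
    ∏ i, q ^ ((k i - 1) * (m i : ℕ)) / ((1 - q ^ (m i : ℕ)) / (1 - q)) ^ (k i)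

/-- The modified value `z̄_n(k;q) = (1-q)^{-wt(k)} z_n(k;q)`. -/
noncomputable def zbar (n : ℕ) {r : ℕ} (k : Fin r → ℕ) (q : ℂ) : ℂ :=
  (1 - q)⁻¹ ^ (∑ i, k i) * z n k q

/-- The modified star value `z̄*_n(k;q) = (1-q)^{-wt(k)} z*_n(k;q)`. -/
noncomputable def zstarbar (n : ℕ) {r : ℕ} (k : Fin r → ℕ) (q : ℂ) : ℂ :=
  (1 - q)⁻¹ ^ (∑ i, k i) * zstar n k q

/-- `I(k,r,s)`: the set of indices (tuples of positive integers) of weight `k`,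
depth `r` and height `s`. -/
def indexSet3 (k r s : ℕ) : Finset (Fin r → ℕ) :=
  (Finset.Nat.antidiagonalTuple r k).filter fun a =>
    (∀ i, 1 ≤ a i) ∧ (Finset.univ.filter fun i => 2 ≤ a i).card = s

/-- `I(k,r)`: the set of indices of weight `k` and depth `r`. -/
def indexSet2 (k r : ℕ) : Finset (Fin r → ℕ) :=
  (Finset.Nat.antidiagonalTuple r k).filter fun a => ∀ i, 1 ≤ a i

/-- The one-variable finite q-multiple polylogarithm
`L_{k_1,…,k_r}^{(n)}(t;q) = Σ_{n > m_1 > … > m_r > 0} t^{m_1} / Π_i (1-q^{m_i})^{k_i}`,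
with `L_∅(t) = 1`. -/
noncomputable def Lpoly (n : ℕ) {r : ℕ} (k : Fin r → ℕ) (q t : ℂ) : ℂ :=
  ∑ m ∈ msets n r,
    ∏ i : Fin r, (if i.val = 0 then t ^ (m i : ℕ) else 1) / (1 - q ^ (m i : ℕ)) ^ (k i)

/-- The star version `L*_{k_1,…,k_r}^{(n)}(t;q)`, summed over `n > m_1 ≥ … ≥ m_r > 0`. -/
noncomputable def LpolyStar (n : ℕ) {r : ℕ} (k : Fin r → ℕ) (q t : ℂ) : ℂ :=
  ∑ m ∈ msetsStar n r,
    ∏ i : Fin r, (if i.val = 0 then t ^ (m i : ℕ) else 1) / (1 - q ^ (m i : ℕ)) ^ (k i)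


section ZnOnesAux

open Polynomial

/-- Sum over strictly decreasing tuples equals sum over subsets of size `r`. -/
private lemma sum_msets_eq_powersetCard (n r : ℕ) (g : ℕ → ℂ)
    :
    ∑ m ∈ msets n r, ∏ i, g (m i : ℕ)
      = ∑ S ∈ (Finset.Ioo 0 n).powersetCard r, ∏ x ∈ S, g x := by
  rw [msets]
  have hinj : ∀ (m : Fin r → Fin n), (∀ i j : Fin r, i < j → m j < m i) →
      Function.Injective (fun i => ((m i : ℕ))) := by
    intro m hdec a b hab
    simp only at hab
    rcases lt_trichotomy a b with h | h | h
    · have := hdec a b h; rw [Fin.lt_def] at this; omega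
    · exact h
    · have := hdec b a h; rw [Fin.lt_def] at this; omega
  refine Finset.sum_bij'
    (fun m _ => Finset.image (fun i => ((m i : ℕ))) Finset.univ)
    (fun S hS => fun i : Fin r =>
      (⟨S.orderEmbOfFin (Finset.mem_powersetCard.mp hS).2 i.rev,
        (Finset.mem_Ioo.mp ((Finset.mem_powersetCard.mp hS).1
          (S.orderEmbOfFin_mem _ i.rev))).2⟩ : Fin n))
    ?_ ?_ ?_ ?_ ?_
  · -- hi
    intro m hm
    simp only [Finset.mem_filter, Finset.mem_univ, true_and] at hm
    obtain ⟨hdec, hpos⟩ := hm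
    rw [Finset.mem_powersetCard]
    constructor
    · intro x hx
      obtain ⟨i, -, rfl⟩ := Finset.mem_image.mp hx
      exact Finset.mem_Ioo.mpr ⟨hpos i, (m i).isLt⟩
    · rw [Finset.card_image_of_injective _ (hinj m hdec), Finset.card_univ,
        Fintype.card_fin]
  · -- hj
    intro S hS
    simp only [Finset.mem_filter, Finset.mem_univ, true_and]
    constructor
    · intro i j hij
      rw [Fin.lt_def]
      exact (S.orderEmbOfFin (Finset.mem_powersetCard.mp hS).2).strictMono
        (Fin.rev_lt_rev.mpr hij)
    · intro i
      exact (Finset.mem_Ioo.mp ((Finset.mem_powersetCard.mp hS).1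
        (S.orderEmbOfFin_mem _ i.rev))).1
  · -- left_inv
    intro m hm
    simp only [Finset.mem_filter, Finset.mem_univ, true_and] at hm
    obtain ⟨hdec, hpos⟩ := hm
    funext i
    apply Fin.ext
    simp only
    set S := Finset.image (fun i => ((m i : ℕ))) Finset.univ with hS
    have hc : S.card = r := by
      rw [hS, Finset.card_image_of_injective _ (hinj m hdec), Finset.card_univ,
        Fintype.card_fin]
    have hmono : StrictMono (fun i : Fin r => ((m i.rev : ℕ))) := by
      intro a b hab
      have := hdec b.rev a.rev (Fin.rev_lt_rev.mpr hab)
      rw [Fin.lt_def] at this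
      exact this
    have hfs : ∀ x : Fin r, ((m x.rev : ℕ)) ∈ S := fun x =>
      Finset.mem_image.mpr ⟨x.rev, Finset.mem_univ _, rfl⟩
    have huniq := Finset.orderEmbOfFin_unique hc hfs hmono
    have := congrFun huniq i.rev
    simp only [Fin.rev_rev] at this
    exact this.symm
  · -- right_inv
    intro S hS
    have hc : S.card = r := (Finset.mem_powersetCard.mp hS).2
    apply Finset.eq_of_subset_of_card_le
    · intro x hx
      obtain ⟨i, -, rfl⟩ := Finset.mem_image.mp hx
      exact S.orderEmbOfFin_mem _ i.rev
    · rw [Finset.card_image_of_injective, Finset.card_univ, Fintype.card_fin, hc]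
      intro a b hab
      simp only at hab
      have := (S.orderEmbOfFin hc).injective hab
      exact Fin.rev_injective this
  · -- h
    intro m hm
    simp only [Finset.mem_filter, Finset.mem_univ, true_and] at hm
    rw [Finset.prod_image fun x _ y _ h => hinj m hm.1 h]

private lemma geom_prod (n : ℕ) (hn : 0 < n) {ζ : ℂ} (hζ : IsPrimitiveRoot ζ n) :
    ∏ x ∈ Finset.Ioo 0 n, ((X : ℂ[X]) - C (ζ ^ x)) = ∑ k ∈ Finset.range n, (X : ℂ[X]) ^ k := by
  have hfull : (X : ℂ[X]) ^ n - C 1 = ∏ i ∈ Finset.range n, (X - C (ζ ^ i * 1)) :=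
    X_pow_sub_C_eq_prod hζ hn (one_pow n)
  simp only [mul_one, map_one] at hfull
  have hins : Finset.range n = insert 0 (Finset.Ioo 0 n) := by
    ext a; simp [Finset.mem_Ioo]; omega
  rw [hins, Finset.prod_insert (by simp)] at hfull
  simp only [pow_zero, map_one] at hfull
  have hgeom : ((X : ℂ[X]) - 1) * ∑ k ∈ Finset.range n, (X : ℂ[X]) ^ k
      = (X : ℂ[X]) ^ n - 1 := by
    rw [mul_comm]; exact geom_sum_mul X n
  have hx1 : (X : ℂ[X]) - 1 ≠ 0 := by
    have := Polynomial.X_sub_C_ne_zero (1 : ℂ)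
    simpa using this
  apply mul_left_cancel₀ hx1
  rw [hgeom, hfull]


private lemma prod_one_sub (n : ℕ) (hn : 0 < n) {ζ : ℂ} (hζ : IsPrimitiveRoot ζ n) :
    ∏ x ∈ Finset.Ioo 0 n, (1 - ζ ^ x) = (n : ℂ) := by
  have := congrArg (Polynomial.eval 1) (geom_prod n hn hζ)
  simpa [eval_prod, eval_finset_sum] using this


private lemma prod_eq_sum_poly (n : ℕ) (hn : 0 < n) {ζ : ℂ} (hζ : IsPrimitiveRoot ζ n) :
    ∏ x ∈ Finset.Ioo 0 n, (C (1 - ζ ^ x) * X + 1)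
      = ∑ k ∈ Finset.range n, (X : ℂ[X]) ^ (n - 1 - k) * (X + 1) ^ k := by
  apply Polynomial.funext
  intro t
  simp only [eval_prod, eval_finset_sum, eval_add, eval_mul, eval_pow, eval_C, eval_X,
    eval_one]
  by_cases ht : t = 0
  · subst ht
    simp only [mul_zero, zero_add, Finset.prod_const_one, zero_add]
    rw [Finset.sum_eq_single (n - 1)]
    · simp
    · intro k hk hne
      rw [Finset.mem_range] at hk
      have : n - 1 - k ≠ 0 := by omega
      simp [zero_pow this]
    · intro h
      exact absurd (Finset.mem_range.mpr (by omega)) h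
  · have h1 : ∀ x ∈ Finset.Ioo 0 n, (1 - ζ ^ x) * t + 1 = t * ((1 + t⁻¹) - ζ ^ x) := by
      intro x hx; field_simp; ring
    rw [Finset.prod_congr rfl h1, Finset.prod_mul_distrib, Finset.prod_const, Nat.card_Ioo]
    have hgeom := congrArg (Polynomial.eval (1 + t⁻¹)) (geom_prod n hn hζ)
    simp only [eval_prod, eval_finset_sum, eval_sub, eval_X, eval_C, eval_pow] at hgeom
    rw [hgeom, Finset.mul_sum]
    refine Finset.sum_congr rfl fun k hk => ?_
    rw [Finset.mem_range] at hk
    have hk' : k ≤ n - 1 := by omega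
    have h2 : (1 + t⁻¹) ^ k = (t + 1) ^ k / t ^ k := by
      rw [← div_pow]; congr 1; field_simp
    rw [h2, pow_sub₀ t ht hk']
    simp only [Nat.sub_zero]
    field_simp

private lemma key_sum (n : ℕ) (hn : 0 < n) {ζ : ℂ} (hζ : IsPrimitiveRoot ζ n)
    (r : ℕ) (hr2 : r ≤ n - 1) :
    ∑ S ∈ (Finset.Ioo 0 n).powersetCard r, ∏ x ∈ S, (1 - ζ ^ x)⁻¹
      = (n.choose (r + 1) : ℂ) / (n : ℂ) := by
  have hne : ∀ x ∈ Finset.Ioo 0 n, (1 : ℂ) - ζ ^ x ≠ 0 := by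
    intro x hx
    rw [Finset.mem_Ioo] at hx
    intro h
    have : ζ ^ x = 1 := by linear_combination -h
    rw [hζ.pow_eq_one_iff_dvd] at this
    have := Nat.le_of_dvd hx.1 this
    omega
  have hcard : (Finset.Ioo 0 n).card = n - 1 := by simp
  set P : ℂ[X] := ∏ x ∈ Finset.Ioo 0 n, (X + C ((1 - ζ ^ x)⁻¹)) with hP
  -- Vieta
  have hvieta : P.coeff (n - 1 - r)
      = ∑ S ∈ (Finset.Ioo 0 n).powersetCard r, ∏ x ∈ S, (1 - ζ ^ x)⁻¹ := by
    have h := Finset.prod_X_add_C_coeff (Finset.Ioo 0 n)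
      (fun x => (1 - ζ ^ x)⁻¹) (k := n - 1 - r) (by rw [hcard]; omega)
    rw [hcard, Nat.sub_sub_self hr2] at h
    rw [hP]
    exact h
  -- the product identity
  have hCP : C (n : ℂ) * P = ∑ k ∈ Finset.range n, (X : ℂ[X]) ^ (n - 1 - k) * (X + 1) ^ k := by
    rw [← prod_one_sub n hn hζ, map_prod, hP, ← Finset.prod_mul_distrib]
    rw [← prod_eq_sum_poly n hn hζ]
    refine Finset.prod_congr rfl fun x hx => ?_
    rw [mul_add, ← map_mul, mul_inv_cancel₀ (hne x hx), map_one]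
  -- coefficient of the RHS
  have hQ : (∑ k ∈ Finset.range n, (X : ℂ[X]) ^ (n - 1 - k) * (X + 1) ^ k).coeff (n - 1 - r)
      = (n.choose (r + 1) : ℂ) := by
    rw [finset_sum_coeff]
    have hterm : ∀ k ∈ Finset.range n,
        ((X : ℂ[X]) ^ (n - 1 - k) * (X + 1) ^ k).coeff (n - 1 - r)
          = if r ≤ k then (k.choose r : ℂ) else 0 := by
      intro k hk
      rw [Finset.mem_range] at hk
      rw [mul_comm, Polynomial.coeff_mul_X_pow']
      by_cases hrk : r ≤ k
      · rw [if_pos (by omega), if_pos hrk]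
        have he : n - 1 - r - (n - 1 - k) = k - r := by omega
        rw [he, Polynomial.coeff_X_add_one_pow, Nat.choose_symm hrk]
      · rw [if_neg (by omega), if_neg hrk]
    rw [Finset.sum_congr rfl hterm, ← Finset.sum_filter]
    have hfil : (Finset.range n).filter (fun k => r ≤ k) = Finset.Icc r (n - 1) := by
      ext a; simp; omega
    rw [hfil]
    rw [← Nat.cast_sum]
    rw [Nat.sum_Icc_choose (n - 1) r]
    congr 2
    omega
  have hcoeff := congrArg (fun p : ℂ[X] => p.coeff (n - 1 - r)) hCP
  simp only [Polynomial.coeff_C_mul] at hcoeff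
  rw [hvieta, hQ] at hcoeff
  have hn0 : (n : ℂ) ≠ 0 := Nat.cast_ne_zero.mpr hn.ne'
  rw [eq_div_iff hn0]
  linear_combination hcoeff

end ZnOnesAux

/-- `z_n({1}^r; ζ_n) = (1/n)·C(n, r+1)·(1-ζ_n)^r` for `1 ≤ r ≤ n-1`. -/
theorem zn_ones_eval (n : ℕ) (hn : 0 < n) (ζ : ℂ) (hζ : IsPrimitiveRoot ζ n)
    (r : ℕ) (hr1 : 1 ≤ r) (hr2 : r ≤ n - 1) :
    z n (fun _ : Fin r => 1) ζ =
      (1 / (n : ℂ)) * (n.choose (r + 1) : ℂ) * (1 - ζ) ^ r := by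
  have hterm : ∀ m : Fin r → Fin n,
      (∏ i, ζ ^ ((1 - 1) * (m i : ℕ)) / ((1 - ζ ^ (m i : ℕ)) / (1 - ζ)) ^ (1 : ℕ))
        = (1 - ζ) ^ r * ∏ i, (1 - ζ ^ (m i : ℕ))⁻¹ := by
    intro m
    have h1 : ∀ i : Fin r,
        ζ ^ ((1 - 1) * (m i : ℕ)) / ((1 - ζ ^ (m i : ℕ)) / (1 - ζ)) ^ (1 : ℕ)
          = (1 - ζ) * (1 - ζ ^ (m i : ℕ))⁻¹ := by
      intro i
      simp only [Nat.sub_self, zero_mul, pow_zero, pow_one]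
      rw [one_div, inv_div, div_eq_mul_inv]
    rw [Finset.prod_congr rfl fun i _ => h1 i, Finset.prod_mul_distrib,
      Finset.prod_const, Finset.card_univ, Fintype.card_fin]
  calc z n (fun _ : Fin r => 1) ζ
      = ∑ m ∈ msets n r, (1 - ζ) ^ r * ∏ i, (1 - ζ ^ (m i : ℕ))⁻¹ := by
        rw [z]; exact Finset.sum_congr rfl fun m _ => hterm m
    _ = (1 - ζ) ^ r * ∑ m ∈ msets n r, ∏ i, (1 - ζ ^ (m i : ℕ))⁻¹ := by
        rw [Finset.mul_sum]
    _ = (1 - ζ) ^ r * ∑ S ∈ (Finset.Ioo 0 n).powersetCard r, ∏ x ∈ S, (1 - ζ ^ x)⁻¹ := by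
        rw [sum_msets_eq_powersetCard n r fun x => (1 - ζ ^ x)⁻¹]
    _ = (1 - ζ) ^ r * ((n.choose (r + 1) : ℂ) / (n : ℂ)) := by
        rw [key_sum n hn hζ r hr2]
    _ = (1 / (n : ℂ)) * (n.choose (r + 1) : ℂ) * (1 - ζ) ^ r := by ring
end

section
/- For every positive integer n, every primitive n-th root of unity ζ_n in ℂ, and every positive integer r, one has z_n({2}^r; ζ_n) = ((-1)^r / (n·(r+1))) · binom(n+r, 2r+1) · (1-ζ_n)^{2r}. -/
open Finset

/-!
Put `c i = ζ ^ i / (1 - ζ ^ i) ^ 2`, so that `z_n({2}^r; ζ) = (1 - ζ) ^ (2r) e_r(c 1, …, c (n-1))`.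
For `T = 2 - (y + y⁻¹)` one has `(1 - ζ ^ i) ^ 2 + ζ ^ i T = (1 - ζ ^ i y) (1 - ζ ^ i y⁻¹)`, so the
product of the left-hand sides over `i < n` is `(1 - y ^ n) (1 - y⁻¹ ^ n) = 2 - D_n(2 - T)`, where
`D_n` is the Dickson polynomial, `D_n(y + y⁻¹) = y ^ n + y⁻¹ ^ n`. The factor `i = 0` is `T` and the
others give `n ^ 2 ∏ (1 + c i T)`, so `n ^ 2 e_r` is, up to sign, the coefficient of `T ^ (r+1)` in
`D_n(2 - T)`. The three-term recurrence of `D_n` identifies it as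
`2 C(n+r+1, 2r+2) - C(n+r, 2r+1) = n / (r+1) · C(n+r, 2r+1)`.
-/

open Polynomial

theorem choose_add_two_add_choose (N K : ℕ) :
    (N + 2).choose (K + 2) + N.choose (K + 2) = N.choose K + 2 * (N + 1).choose (K + 2) := by
  simp only [Nat.choose_succ_succ]; ring

theorem coeff_dickson_one_one_comp_two_sub_X {R : Type*} [CommRing R] (n k : ℕ) :
    ((dickson 1 (1 : R) n).comp (2 - X)).coeff (k + 1) =
      (-1) ^ (k + 1) * (2 * ((n + k + 1).choose (2 * k + 2) : R) - (n + k).choose (2 * k + 1)) := by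
  induction n using Nat.twoStepInduction generalizing k with
  | zero =>
    rw [Nat.choose_eq_zero_of_lt (by omega), Nat.choose_eq_zero_of_lt (by omega)]
    simp [coeff_one]
  | one =>
    rcases k with _ | k
    · norm_num
    · rw [Nat.choose_eq_zero_of_lt (by omega), Nat.choose_eq_zero_of_lt (by omega)]
      simp [coeff_X_of_ne_one]
  | more n ih₀ ih₁ =>
    have hrec : (dickson 1 (1 : R) (n + 2)).comp (2 - X) =
        C 2 * (dickson 1 1 (n + 1)).comp (2 - X) - X * (dickson 1 1 (n + 1)).comp (2 - X) -
          (dickson 1 1 n).comp (2 - X) := by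
      simp only [dickson_add_two, sub_comp, mul_comp, X_comp, C_1, one_mul, C_ofNat]
      ring
    rw [hrec, coeff_sub, coeff_sub, coeff_X_mul, ih₀, coeff_C_mul, ih₁]
    rcases k with _ | k
    · have hconst : ((dickson 1 (1 : R) (n + 1)).comp (2 - X)).coeff 0 = 2 := by
        rw [coeff_zero_eq_eval_zero, eval_comp]
        simpa [one_add_one_eq_two] using dickson_one_one_eval_add_inv (1 : R) 1 (mul_one 1) (n + 1)
      have hsq (m : ℕ) : 2 * ((m + 1).choose 2 : R) - m.choose 1 = m ^ 2 := by
        have := Nat.add_one_mul_choose_eq m 1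
        rw [Nat.choose_one_right] at this ⊢
        rw [show (2 : R) * _ = ((m + 1).choose 2 * 2 : ℕ) by push_cast; ring, ← this]
        push_cast; ring
      simp only [hconst, add_zero, mul_zero, zero_add, hsq]
      push_cast; ring
    · rw [ih₁]
      have hu := congrArg (Nat.cast : ℕ → R) (choose_add_two_add_choose (n + k + 2) (2 * k + 2))
      have hv := congrArg (Nat.cast : ℕ → R) (choose_add_two_add_choose (n + k + 1) (2 * k + 1))
      push_cast at hu hv
      ring_nf at hu hv ⊢
      linear_combination (-1) ^ k * (hv - 2 * hu)

theorem coeff_prod_one_add_C_mul_X {R ι : Type*} [CommSemiring R] (s : Finset ι) (c : ι → R)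
    (k : ℕ) : (∏ i ∈ s, (1 + C (c i) * X)).coeff k = ∑ t ∈ s.powersetCard k, ∏ i ∈ t, c i := by
  classical
  simp only [prod_one_add, prod_mul_distrib, prod_const, ← map_prod, finsetSum_coeff,
    coeff_C_mul_X_pow, sum_ite, sum_const_zero, add_zero, powersetCard_eq_filter, eq_comm]

theorem exists_ne_zero_add_inv_eq {K : Type*} [Field K] [IsAlgClosed K] (t : K) :
    ∃ y : K, y ≠ 0 ∧ y + y⁻¹ = t := by
  obtain ⟨y, hy⟩ := IsAlgClosed.exists_root (C 1 * X ^ 2 + C (-t) * X + C 1 : K[X])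
    (by rw [degree_quadratic one_ne_zero]; decide)
  have hy : y ^ 2 - t * y + 1 = 0 := by simpa [sub_eq_add_neg] using hy
  have hy₀ : y ≠ 0 := by rintro rfl; simp at hy
  refine ⟨y, hy₀, ?_⟩
  field_simp
  linear_combination hy

namespace IsPrimitiveRoot

section IsDomain
variable {K : Type*} [CommRing K] [IsDomain K] {n : ℕ} {ζ : K}

theorem prod_one_sub_pow_mul (hζ : IsPrimitiveRoot ζ n) (hn : 0 < n) (y : K) :
    ∏ i ∈ range n, (1 - ζ ^ i * y) = 1 - y ^ n := by
  simpa [eval_prod] using congrArg (eval 1) (X_pow_sub_C_eq_prod hζ hn (rfl : y ^ n = y ^ n)).symm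

theorem prod_Ico_one_sub_pow (hζ : IsPrimitiveRoot ζ n) (hn : 0 < n) :
    ∏ i ∈ Ico 1 n, (1 - ζ ^ i) = n := by
  obtain ⟨m, rfl⟩ := Nat.exists_eq_add_of_lt hn
  simpa [prod_Ico_eq_prod_range, add_comm 1] using hζ.prod_one_sub_pow_eq_order

end IsDomain

section IsAlgClosed
variable {K : Type*} [Field K] [IsAlgClosed K] {n : ℕ} {ζ : K}

theorem prod_sq_add_mul_X_eq_two_sub_dickson (hζ : IsPrimitiveRoot ζ n) (hn : 0 < n) :
    ∏ i ∈ range n, (C ((1 - ζ ^ i) ^ 2) + C (ζ ^ i) * X) =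
      2 - (dickson 1 (1 : K) n).comp (2 - X) := by
  refine Polynomial.funext fun T => ?_
  obtain ⟨y, hy, hT⟩ := exists_ne_zero_add_inv_eq (2 - T)
  have hfactor (i : ℕ) : (1 - ζ ^ i) ^ 2 + ζ ^ i * T = (1 - ζ ^ i * y) * (1 - ζ ^ i * y⁻¹) := by
    rw [show T = 2 - (y + y⁻¹) by rw [hT]; ring]
    field_simp
    ring
  simp only [eval_prod, eval_add, eval_mul, eval_C, eval_X, hfactor, prod_mul_distrib,
    prod_one_sub_pow_mul hζ hn, eval_sub, eval_comp, eval_ofNat, ← hT,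
    dickson_one_one_eval_add_inv y y⁻¹ (mul_inv_cancel₀ hy)]
  rw [inv_pow]
  field_simp
  ring

theorem sq_mul_sum_powersetCard_prod (hζ : IsPrimitiveRoot ζ n) (hn : 0 < n) (r : ℕ) :
    (n : K) ^ 2 * ∑ t ∈ (Ico 1 n).powersetCard r, ∏ i ∈ t, ζ ^ i / (1 - ζ ^ i) ^ 2 =
      (-1) ^ r * (2 * ((n + r + 1).choose (2 * r + 2) : K) - (n + r).choose (2 * r + 1)) := by
  have hfactor : ∀ i ∈ Ico 1 n, C ((1 - ζ ^ i) ^ 2) + C (ζ ^ i) * X =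
      C ((1 - ζ ^ i) ^ 2) * (1 + C (ζ ^ i / (1 - ζ ^ i) ^ 2) * X) := fun i hi => by
    have : 1 - ζ ^ i ≠ 0 := sub_ne_zero.2 (hζ.pow_ne_one_of_pos_of_lt
      (by have := (mem_Ico.1 hi).1; omega) (mem_Ico.1 hi).2).symm
    rw [mul_add, mul_one, ← mul_assoc, ← C_mul, mul_div_cancel₀ _ (pow_ne_zero 2 this)]
  have hprod : ∏ i ∈ range n, (C ((1 - ζ ^ i) ^ 2) + C (ζ ^ i) * X) =
      X * (C ((n : K) ^ 2) * ∏ i ∈ Ico 1 n, (1 + C (ζ ^ i / (1 - ζ ^ i) ^ 2) * X)) := by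
    rw [range_eq_Ico, prod_eq_prod_Ico_succ_bot hn, prod_congr rfl hfactor, prod_mul_distrib,
      ← map_prod, prod_pow, hζ.prod_Ico_one_sub_pow hn]
    simp
  have := congrArg (coeff · (r + 1)) (hζ.prod_sq_add_mul_X_eq_two_sub_dickson hn)
  simp only [hprod, coeff_X_mul, coeff_C_mul, coeff_prod_one_add_C_mul_X, coeff_sub,
    coeff_dickson_one_one_comp_two_sub_X, coeff_ofNat_succ] at this
  linear_combination this

end IsAlgClosed

end IsPrimitiveRoot

section msets
variable {n r : ℕ}

theorem strictAnti_val_of_mem_msets {m : Fin r → Fin n} (hm : m ∈ msets n r) :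
    StrictAnti fun i => (m i : ℕ) :=
  fun _ _ hij => (mem_filter.1 hm).2.1 _ _ hij

theorem image_val_mem_powersetCard_of_mem_msets {m : Fin r → Fin n} (hm : m ∈ msets n r) :
    univ.image (fun i => (m i : ℕ)) ∈ (Ico 1 n).powersetCard r := by
  refine mem_powersetCard.2 ⟨fun x hx => ?_, ?_⟩
  · obtain ⟨i, -, rfl⟩ := mem_image.1 hx
    exact mem_Ico.2 ⟨(mem_filter.1 hm).2.2 i, (m i).isLt⟩
  · rw [card_image_of_injective _ (strictAnti_val_of_mem_msets hm).injective, card_univ,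
      Fintype.card_fin]

theorem sum_msets_prod {R : Type*} [CommSemiring R] (f : ℕ → R) :
    ∑ m ∈ msets n r, ∏ i, f (m i) = ∑ t ∈ (Ico 1 n).powersetCard r, ∏ i ∈ t, f i := by
  refine sum_bij (fun m _ => univ.image fun i => (m i : ℕ))
    (fun m hm => image_val_mem_powersetCard_of_mem_msets hm) (fun m₁ hm₁ m₂ hm₂ h => ?_)
    (fun t ht => ?_) (fun m hm => ?_)
  · have := (strictAnti_val_of_mem_msets hm₁).range_inj (strictAnti_val_of_mem_msets hm₂)
    funext i
    exact Fin.ext (congrFun (this.1 (by simpa [Set.ext_iff, Finset.ext_iff] using h)) i)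
  · obtain ⟨hsub, hcard⟩ := mem_powersetCard.1 ht
    have hmem (i : Fin r) : t.orderEmbOfFin hcard i ∈ Ico 1 n :=
      hsub (t.orderEmbOfFin_mem hcard i)
    refine ⟨fun i => ⟨t.orderEmbOfFin hcard i.rev, (mem_Ico.1 (hmem i.rev)).2⟩,
      mem_filter.2 ⟨mem_univ _, fun i j hij => ?_, fun i => (mem_Ico.1 (hmem i.rev)).1⟩, ?_⟩
    · exact (t.orderEmbOfFin hcard).strictMono (Fin.rev_lt_rev.2 hij)
    · apply Finset.coe_injective
      simpa [Function.comp_def] using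
        (Fin.rev_surjective.range_comp (t.orderEmbOfFin hcard)).trans (t.range_orderEmbOfFin hcard)
  · exact (prod_image fun i _ j _ hij => (strictAnti_val_of_mem_msets hm).injective hij).symm

end msets

theorem z_twos_eq_mul_sum_powersetCard (n r : ℕ) (q : ℂ) :
    z n (fun _ : Fin r => 2) q =
      (1 - q) ^ (2 * r) * ∑ t ∈ (Ico 1 n).powersetCard r, ∏ i ∈ t, q ^ i / (1 - q ^ i) ^ 2 := by
  rw [z, ← sum_msets_prod, mul_sum]
  refine sum_congr rfl fun m _ => ?_
  rw [pow_mul, ← Fin.prod_const, ← prod_mul_distrib]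
  refine prod_congr rfl fun i _ => ?_
  rw [show 2 - 1 = 1 from rfl, one_mul, div_pow, div_div_eq_mul_div]
  ring

theorem zn_twos_eval_general (n : ℕ) (hn : 0 < n) (ζ : ℂ) (hζ : IsPrimitiveRoot ζ n)
    (r : ℕ) :
    z n (fun _ : Fin r => 2) ζ =
      ((-1 : ℂ) ^ r / ((n : ℂ) * ((r : ℂ) + 1))) * ((n + r).choose (2 * r + 1) : ℂ) *
        (1 - ζ) ^ (2 * r) := by
  have hchoose : ((n + r + 1 : ℕ) : ℂ) * (n + r).choose (2 * r + 1) =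
      (n + r + 1).choose (2 * r + 2) * (2 * r + 2 : ℕ) := by
    exact_mod_cast Nat.add_one_mul_choose_eq (n + r) (2 * r + 1)
  push_cast at hchoose
  have hn₀ : (n : ℂ) ≠ 0 := Nat.cast_ne_zero.2 hn.ne'
  have hesymm : (n : ℂ) * (r + 1) *
      ∑ t ∈ (Ico 1 n).powersetCard r, ∏ i ∈ t, ζ ^ i / (1 - ζ ^ i) ^ 2 =
        (-1) ^ r * (n + r).choose (2 * r + 1) :=
    mul_left_cancel₀ hn₀ <| by
      linear_combination (r + 1) * hζ.sq_mul_sum_powersetCard_prod hn r - (-1) ^ r * hchoose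
  rw [z_twos_eq_mul_sum_powersetCard]
  field_simp
  linear_combination (1 - ζ) ^ (2 * r) * hesymm

/-- `z_n({2}^r; ζ_n) = ((-1)^r/(n(r+1)))·C(n+r, 2r+1)·(1-ζ_n)^{2r}`. -/
theorem zn_twos_eval (n : ℕ) (hn : 0 < n) (ζ : ℂ) (hζ : IsPrimitiveRoot ζ n)
    (r : ℕ) (hr : 1 ≤ r) :
    z n (fun _ : Fin r => 2) ζ =
      ((-1 : ℂ) ^ r / ((n : ℂ) * ((r : ℂ) + 1))) * ((n + r).choose (2 * r + 1) : ℂ) *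
        (1 - ζ) ^ (2 * r) :=
  zn_twos_eval_general n hn ζ hζ r
end

section
/- For all positive integers k, r, every positive integer n, and every primitive n-th root of unity ζ_n in ℂ, there exists a rational number c such that z_n({k}^r; ζ_n) = c · (1-ζ_n)^{kr}. -/
open Finset

/-!
Since `1 / [m]_q^k = (1 - q)^k / (1 - q^m)^k`, we have
`z_n({k}^r; q) = (1 - q)^{kr} e_r(f(q^m) : 0 < m < n)`, where `f(w) = w^{k-1} / (1 - w)^k` and
`e_r` is the `r`-th elementary symmetric function. For a primitive `n`-th root of unity `ζ`, the
multiset `{ζ^m : 0 < m < n}` consists of the `n`-th roots of unity other than `1`, so it does not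
depend on the choice of `ζ`. In the cyclotomic field every Galois automorphism sends `ζ` to another
primitive root, hence fixes `e_r(f(ζ^m))`, which is therefore rational.
-/

open Polynomial

theorem Multiset.map_esymm {R S G : Type*} [CommSemiring R] [CommSemiring S] [FunLike G R S]
    [RingHomClass G R S] (φ : G) (s : Multiset R) (r : ℕ) : φ (s.esymm r) = (s.map φ).esymm r := by
  simp [Multiset.esymm, map_multiset_sum, Multiset.powersetCard_map, map_multiset_prod,
    Multiset.map_map]

theorem IsPrimitiveRoot.map_pow_Ioo_eq {R : Type*} [CommRing R] [IsDomain R] {n : ℕ} {ζ ξ : R}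
    (hζ : IsPrimitiveRoot ζ n) (hξ : IsPrimitiveRoot ξ n) :
    (Ioo 0 n).val.map (ζ ^ ·) = (Ioo 0 n).val.map (ξ ^ ·) := by
  rcases n.eq_zero_or_pos with rfl | hn
  · simp
  have hrange (η : R) : (Multiset.range n).map (η ^ ·) = 1 ::ₘ (Ioo 0 n).val.map (η ^ ·) := by
    rw [← Finset.range_val, Finset.range_eq_Ico, ← Finset.Ioo_insert_left hn,
      Finset.insert_val_of_notMem (by simp), Multiset.map_cons, pow_zero]
  have h := (hζ.nthRoots_eq (one_pow n)).symm.trans (hξ.nthRoots_eq (one_pow n))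
  simp only [mul_one] at h
  rwa [hrange, hrange, Multiset.cons_inj_right] at h

section powEsymm

variable {K F F' : Type*} [CommSemiring K] [Field F] [Field F'] [Algebra K F] [Algebra K F']

noncomputable def powEsymm (p q : K[X]) (n r : ℕ) (ζ : F) : F :=
  (((Ioo 0 n).val.map (ζ ^ ·)).map fun w ↦ aeval w p / aeval w q).esymm r

theorem AlgHom.map_powEsymm (φ : F →ₐ[K] F') (p q : K[X]) (n r : ℕ) (ζ : F) :
    φ (powEsymm p q n r ζ) = powEsymm p q n r (φ ζ) := by
  have hφ (w : F) : φ (aeval w p / aeval w q) = aeval (φ w) p / aeval (φ w) q := by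
    rw [map_div₀, aeval_algHom_apply, aeval_algHom_apply]
  simp only [powEsymm, Multiset.map_esymm, Multiset.map_map, Function.comp_def,
    hφ, map_pow]

theorem IsPrimitiveRoot.powEsymm_eq {n : ℕ} {ζ ξ : F} (hζ : IsPrimitiveRoot ζ n)
    (hξ : IsPrimitiveRoot ξ n) (p q : K[X]) (r : ℕ) :
    powEsymm p q n r ζ = powEsymm p q n r ξ := by
  rw [powEsymm, powEsymm, hζ.map_pow_Ioo_eq hξ]

end powEsymm

theorem IsPrimitiveRoot.exists_rat_powEsymm_eq {F : Type*} [Field F] [CharZero F] [IsAlgClosed F]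
    {n : ℕ} (hn : 0 < n) {ζ : F} (hζ : IsPrimitiveRoot ζ n) (p q : ℚ[X]) (r : ℕ) :
    ∃ c : ℚ, powEsymm p q n r ζ = c := by
  have : NeZero n := ⟨hn.ne'⟩
  -- not found by instance search
  have : IsCyclotomicExtension {n} ℚ (CyclotomicField n ℚ) :=
    CyclotomicField.isCyclotomicExtension n ℚ
  have := IsCyclotomicExtension.isGalois {n} ℚ (CyclotomicField n ℚ)
  have := IsCyclotomicExtension.finiteDimensional {n} ℚ (CyclotomicField n ℚ)
  set ζL := IsCyclotomicExtension.zeta n ℚ (CyclotomicField n ℚ)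
  have hζL : IsPrimitiveRoot ζL n := IsCyclotomicExtension.zeta_spec n ℚ _
  have hfixed (σ : Gal(CyclotomicField n ℚ/ℚ)) : σ (powEsymm p q n r ζL) = powEsymm p q n r ζL := by
    rw [← AlgEquiv.coe_toAlgHom, AlgHom.map_powEsymm]
    exact (hζL.map_of_injective σ.injective).powEsymm_eq hζL p q r
  obtain ⟨c, hc⟩ := (IsGalois.mem_range_algebraMap_iff_fixed _).2 hfixed
  let φ : CyclotomicField n ℚ →ₐ[ℚ] F := IsAlgClosed.lift
  refine ⟨c, ?_⟩
  calc powEsymm p q n r ζ = powEsymm p q n r (φ ζL) :=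
        hζ.powEsymm_eq (hζL.map_of_injective (f := φ) φ.injective) p q r
    _ = φ (powEsymm p q n r ζL) := (φ.map_powEsymm p q n r ζL).symm
    _ = c := by rw [← hc, φ.commutes, eq_ratCast]

theorem sum_msets_prod_eq_esymm {R : Type*} [CommSemiring R] (n r : ℕ) (f : ℕ → R) :
    ∑ m ∈ msets n r, ∏ i, f (m i) = ((Ioo 0 n).val.map f).esymm r := by
  have anti (m) (hm : m ∈ msets n r) : StrictAnti fun i ↦ (m i : ℕ) :=
    fun i j hij ↦ (mem_filter.1 hm).2.1 i j hij
  rw [Finset.esymm_map_val]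
  refine sum_bij (fun m _ ↦ univ.image fun i ↦ (m i : ℕ)) (fun m hm ↦ ?_) (fun m hm m' hm' h ↦ ?_)
    (fun t ht ↦ ?_) (fun m hm ↦ (prod_image fun i _ j _ h ↦ (anti m hm).injective h).symm)
  · refine mem_powersetCard.2
      ⟨fun x hx ↦ ?_, by simp [card_image_of_injective _ (anti m hm).injective]⟩
    obtain ⟨i, -, rfl⟩ := mem_image.1 hx
    exact mem_Ioo.2 ⟨(mem_filter.1 hm).2.2 i, (m i).2⟩
  · have := congrArg (fun s : Finset ℕ ↦ (s : Set ℕ)) h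
    simp only [coe_image, coe_univ, Set.image_univ] at this
    funext i
    exact Fin.val_injective (congrFun ((anti m hm).range_inj (anti m' hm') |>.1 this) i)
  · obtain ⟨hsub, hcard⟩ := mem_powersetCard.1 ht
    have hmem (i : Fin r) : t.orderEmbOfFin hcard i ∈ Ioo 0 n := hsub (orderEmbOfFin_mem t hcard i)
    refine ⟨fun i ↦ ⟨t.orderEmbOfFin hcard i.rev, (mem_Ioo.1 (hmem _)).2⟩,
      mem_filter.2 ⟨mem_univ _, fun i j hij ↦ ?_, fun i ↦ (mem_Ioo.1 (hmem _)).1⟩, ?_⟩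
    · exact (t.orderEmbOfFin hcard).strictMono (Fin.rev_lt_rev.2 hij)
    · apply Finset.coe_injective
      simp only [coe_image, coe_univ, Set.image_univ]
      rw [← range_orderEmbOfFin t hcard]
      exact Fin.rev_surjective.range_comp _

theorem z_const_eq (n r k : ℕ) (q : ℂ) :
    z n (fun _ : Fin r ↦ k) q =
      (1 - q) ^ (k * r) * powEsymm (X ^ (k - 1) : ℚ[X]) ((1 - X) ^ k) n r q := by
  set g : ℕ → ℂ := fun m ↦ aeval (q ^ m) (X ^ (k - 1) : ℚ[X]) / aeval (q ^ m) ((1 - X) ^ k : ℚ[X])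
  have hterm (m : ℕ) : q ^ ((k - 1) * m) / ((1 - q ^ m) / (1 - q)) ^ k = (1 - q) ^ k * g m := by
    simp only [g, map_pow, map_sub, map_one, aeval_X]
    rw [div_pow, div_div_eq_mul_div, pow_mul']
    ring
  simp only [z, hterm, prod_mul_distrib, prod_const, card_univ, Fintype.card_fin, ← pow_mul,
    ← mul_sum]
  rw [sum_msets_prod_eq_esymm, powEsymm, Multiset.map_map]
  rfl

theorem zn_kkk_rational_general (k r : ℕ)
    (n : ℕ) (hn : 0 < n) (ζ : ℂ) (hζ : IsPrimitiveRoot ζ n) :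
    ∃ c : ℚ, z n (fun _ : Fin r => k) ζ = (c : ℂ) * (1 - ζ) ^ (k * r) := by
  obtain ⟨c, hc⟩ := hζ.exists_rat_powEsymm_eq hn (X ^ (k - 1)) ((1 - X) ^ k) r
  exact ⟨c, by rw [z_const_eq, hc, mul_comm]⟩

/-- `z_n({k}^r; ζ_n) ∈ (1-ζ_n)^{kr}·ℚ`. -/
theorem zn_kkk_rational (k r : ℕ) (hk : 1 ≤ k) (hr : 1 ≤ r)
    (n : ℕ) (hn : 0 < n) (ζ : ℂ) (hζ : IsPrimitiveRoot ζ n) :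
    ∃ c : ℚ, z n (fun _ : Fin r => k) ζ = (c : ℂ) * (1 - ζ) ^ (k * r) :=
  zn_kkk_rational_general k r n hn ζ hζ
end

section
/- Let n be a positive integer and ζ_n a primitive n-th root of unity in ℂ. For all integers k ≥ 1, r ≥ 1, s ≥ 0 with r ≥ s and k ≥ r+s, the sum Σ_{k ∈ I(k,r,s)} z̄_n(k; ζ_n), taken over all indices of weight k, depth r, and height s, is a rational number. -/
open Finset

/-! Writing `w = ζ ^ m`, each summand is a product of terms `w ^ (c - 1) / (1 - w) ^ c`, so the
sum lies in `ℚ(ζ)`. An automorphism of `ℚ(ζ)` sends `ζ` to some `ζ ^ b` and hence permutes the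
powers `ζ ^ m`, `0 < m < n`. The sum runs over all `r`-element sets `{m_1 > ⋯ > m_r}` of such
exponents and over an index set that is stable under permuting the entries, so it is fixed by
every automorphism and is therefore rational. -/

section SortDesc

variable {α : Type*} [LinearOrder α] {r : ℕ}

noncomputable def sortDesc (v : Fin r → α) : Fin r → α :=
  v ∘ Tuple.sort (OrderDual.toDual ∘ v)

lemma antitone_sortDesc (v : Fin r → α) : Antitone (sortDesc v) :=
  Tuple.monotone_sort (OrderDual.toDual ∘ v)

lemma sortDesc_comp_perm (v : Fin r → α) (σ : Equiv.Perm (Fin r)) :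
    sortDesc (v ∘ σ) = sortDesc v :=
  Tuple.comp_perm_comp_sort_eq_comp_sort (f := OrderDual.toDual ∘ v)

lemma sortDesc_eq_self {v : Fin r → α} (hv : Antitone v) : sortDesc v = v := by
  rw [sortDesc, Tuple.sort_eq_refl_iff_monotone.mpr hv.dual_right]
  rfl

lemma sortDesc_symm_comp_sortDesc_comp (e : Equiv.Perm α) (v : Fin r → α) :
    sortDesc (e.symm ∘ sortDesc (e ∘ v)) = sortDesc v := by
  have h : e.symm ∘ sortDesc (e ∘ v) = v ∘ Tuple.sort (OrderDual.toDual ∘ e ∘ v) := by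
    ext; simp [sortDesc]
  rw [h, sortDesc_comp_perm]

end SortDesc

lemma mem_msets {n r : ℕ} {m : Fin r → Fin n} :
    m ∈ msets n r ↔ StrictAnti m ∧ ∀ i, 0 < (m i : ℕ) := by
  simp [msets, StrictAnti]

lemma sortDesc_mem_msets {n r : ℕ} {v : Fin r → Fin n} (hv : Function.Injective v)
    (hpos : ∀ i, 0 < (v i : ℕ)) : sortDesc v ∈ msets n r :=
  mem_msets.mpr ⟨(antitone_sortDesc v).strictAnti_of_injective (hv.comp (Equiv.injective _)),
    fun _ => hpos _⟩

lemma comp_perm_mem_indexSet3 {k r s : ℕ} {a : Fin r → ℕ} (ha : a ∈ indexSet3 k r s)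
    (σ : Equiv.Perm (Fin r)) : a ∘ σ ∈ indexSet3 k r s := by
  simp only [indexSet3, mem_filter, Nat.mem_antidiagonalTuple] at ha ⊢
  obtain ⟨hsum, hpos, hcard⟩ := ha
  refine ⟨by rw [Function.comp_def, Equiv.sum_comp σ a, hsum], fun i => hpos (σ i), ?_⟩
  rw [← hcard]
  exact card_equiv σ (by simp)

lemma sum_indexSet3_prod_comp_perm {β M : Type*} [CommSemiring M] (f : β → ℕ → M)
    {r : ℕ} (m : Fin r → β) (σ : Equiv.Perm (Fin r)) (k s : ℕ) :
    ∑ a ∈ indexSet3 k r s, ∏ i, f (m (σ i)) (a i) =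
      ∑ a ∈ indexSet3 k r s, ∏ i, f (m i) (a i) :=
  sum_nbij' (· ∘ σ.symm) (· ∘ σ) (fun _ ha => comp_perm_mem_indexSet3 ha _)
    (fun _ ha => comp_perm_mem_indexSet3 ha _) (fun a _ => by ext; simp)
    (fun a _ => by ext; simp) fun a _ => by
      rw [← Equiv.prod_comp σ fun j => f (m j) ((a ∘ σ.symm) j)]
      simp

section Msets

variable {n r : ℕ}

lemma sortDesc_comp_mem_msets {e : Equiv.Perm (Fin n)} (he : ∀ x, 0 < (e x : ℕ) ↔ 0 < (x : ℕ))
    {m : Fin r → Fin n} (hm : m ∈ msets n r) : sortDesc (e ∘ m) ∈ msets n r :=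
  sortDesc_mem_msets (e.injective.comp (mem_msets.mp hm).1.injective)
    fun i => (he _).mpr ((mem_msets.mp hm).2 i)

lemma sum_msets_comp_perm {M : Type*} [AddCommMonoid M] (g : (Fin r → Fin n) → M)
    (hg : ∀ m (σ : Equiv.Perm (Fin r)), g (m ∘ σ) = g m) (ε : Equiv.Perm (Fin n))
    (hε : ∀ x, 0 < (ε x : ℕ) ↔ 0 < (x : ℕ)) :
    ∑ m ∈ msets n r, g (ε ∘ m) = ∑ m ∈ msets n r, g m := by
  have hε_symm : ∀ x, 0 < (ε.symm x : ℕ) ↔ 0 < (x : ℕ) := fun x => by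
    simpa using (hε (ε.symm x)).symm
  refine sum_nbij' (fun m => sortDesc (ε ∘ m)) (fun m => sortDesc (ε.symm ∘ m))
    (fun _ => sortDesc_comp_mem_msets hε) (fun _ => sortDesc_comp_mem_msets hε_symm)
    (fun m hm => ?_) (fun m hm => ?_) fun m _ => (hg _ _).symm
  · rw [sortDesc_symm_comp_sortDesc_comp, sortDesc_eq_self (mem_msets.mp hm).1.antitone]
  · simpa [sortDesc_eq_self (mem_msets.mp hm).1.antitone] using
      sortDesc_symm_comp_sortDesc_comp ε.symm m

lemma msets_eq_empty_of_le_one (hn : n ≤ 1) (hr : 1 ≤ r) : msets n r = ∅ :=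
  eq_empty_of_forall_notMem fun m hm => by
    have := (mem_msets.mp hm).2 ⟨0, hr⟩
    have := (m ⟨0, hr⟩).isLt
    omega

end Msets

lemma IsPrimitiveRoot.exists_perm_pow_eq_map {K F : Type*} [CommRing K] [IsDomain K]
    [FunLike F K K] [MonoidHomClass F K K] {ζ : K} {n : ℕ} [NeZero n]
    (hζ : IsPrimitiveRoot ζ n) (σ : F) (hσ : Function.Injective σ) :
    ∃ ε : Equiv.Perm (Fin n), (∀ x : Fin n, ζ ^ (ε x : ℕ) = σ (ζ ^ (x : ℕ))) ∧
      ∀ x : Fin n, 0 < (ε x : ℕ) ↔ 0 < (x : ℕ) := by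
  obtain ⟨b, -, hb⟩ := hζ.eq_pow_of_pow_eq_one (ξ := σ ζ) (by
    rw [← map_pow, hζ.pow_eq_one, map_one])
  have key : ∀ x : Fin n, ζ ^ (b * x % n) = σ (ζ ^ (x : ℕ)) := fun x => by
    have h := pow_mod_orderOf ζ (b * x)
    rw [← hζ.eq_orderOf] at h
    rw [h, pow_mul, hb, map_pow]
  let ε : Fin n → Fin n := fun x => ⟨b * x % n, Nat.mod_lt _ (NeZero.pos n)⟩
  have hε : Function.Injective ε := fun x y h => Fin.ext <| hζ.pow_inj x.2 y.2 <| hσ <| by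
    rw [← key, ← key]
    exact congrArg (fun z : Fin n => ζ ^ (z : ℕ)) h
  have pos_iff : ∀ x : Fin n, 0 < (x : ℕ) ↔ ζ ^ (x : ℕ) ≠ 1 := fun x =>
    ⟨fun h => hζ.pow_ne_one_of_pos_of_lt h.ne' x.2, fun h => Nat.pos_of_ne_zero
      fun h0 => h (by rw [h0, pow_zero])⟩
  refine ⟨Equiv.ofBijective ε hε.bijective_of_finite, key, fun x => ?_⟩
  rw [pos_iff, pos_iff]
  exact (key x).symm ▸ not_congr (map_eq_one_iff σ hσ)

def zbarTerm {K : Type*} [DivisionRing K] (w : K) (c : ℕ) : K :=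
  w ^ (c - 1) / (1 - w) ^ c

lemma map_zbarTerm {K L F : Type*} [DivisionRing K] [DivisionRing L] [FunLike F K L]
    [RingHomClass F K L] (σ : F) (w : K) (c : ℕ) :
    σ (zbarTerm w c) = zbarTerm (σ w) c := by
  simp [zbarTerm, map_div₀]

lemma zbar_eq_sum_prod_zbarTerm {n r : ℕ} {q : ℂ} (hq : q ≠ 1) (a : Fin r → ℕ) :
    zbar n a q = ∑ m ∈ msets n r, ∏ i, zbarTerm (q ^ (m i : ℕ)) (a i) := by
  have hq' : 1 - q ≠ 0 := sub_ne_zero.mpr hq.symm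
  rw [zbar, z, mul_sum]
  refine sum_congr rfl fun m _ => ?_
  rw [inv_pow, ← prod_pow_eq_pow_sum, ← prod_inv_distrib, ← prod_mul_distrib]
  refine prod_congr rfl fun i _ => ?_
  rw [zbarTerm, ← pow_mul', div_pow, div_div_eq_mul_div]
  field_simp

open IntermediateField

lemma IsPrimitiveRoot.isCyclotomicExtension_adjoin {K L : Type*} [Field K] [Field L]
    [Algebra K L] {n : ℕ} [NeZero n] {ζ : L} (hζ : IsPrimitiveRoot ζ n) :
    IsCyclotomicExtension {n} K K⟮ζ⟯ := by
  change IsCyclotomicExtension {n} K K⟮ζ⟯.toSubalgebra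
  rw [adjoin_simple_toSubalgebra_of_isAlgebraic
    ((hζ.isIntegral (NeZero.pos n)).tower_top (A := K)).isAlgebraic]
  exact hζ.adjoin_isCyclotomicExtension K

theorem sum_msets_indexSet3_mem_range_algebraMap {K L : Type*} [Field K] [Field L]
    [Algebra K L] {n : ℕ} [NeZero n] {ζ : L} (hζ : IsPrimitiveRoot ζ n) (k r s : ℕ) :
    ∑ m ∈ msets n r, ∑ a ∈ indexSet3 k r s, ∏ i, zbarTerm (ζ ^ (m i : ℕ)) (a i) ∈
      Set.range (algebraMap K L) := by
  have := hζ.isCyclotomicExtension_adjoin (K := K)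
  have := IsCyclotomicExtension.finiteDimensional {n} K K⟮ζ⟯
  have := IsCyclotomicExtension.isGalois {n} K K⟮ζ⟯
  set ζ' := AdjoinSimple.gen K ζ
  have hζ' : IsPrimitiveRoot ζ' n := IsPrimitiveRoot.coe_submonoidClass_iff.mp hζ
  let g : (Fin r → Fin n) → K⟮ζ⟯ := fun m =>
    ∑ a ∈ indexSet3 k r s, ∏ i, zbarTerm (ζ' ^ (m i : ℕ)) (a i)
  have hfixed : ∀ σ : Gal(K⟮ζ⟯/K), σ (∑ m ∈ msets n r, g m) = ∑ m ∈ msets n r, g m := by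
    intro σ
    obtain ⟨ε, hε, hε_pos⟩ := hζ'.exists_perm_pow_eq_map σ σ.injective
    simp only [g, map_sum, map_prod, map_zbarTerm, ← hε]
    have hg : ∀ m (ρ : Equiv.Perm (Fin r)), g (m ∘ ρ) = g m := fun m ρ =>
      sum_indexSet3_prod_comp_perm (fun (x : Fin n) c => zbarTerm (ζ' ^ (x : ℕ)) c) m ρ k s
    exact sum_msets_comp_perm g hg ε hε_pos
  obtain ⟨c, hc⟩ := (IsGalois.mem_range_algebraMap_iff_fixed _).mpr hfixed
  refine ⟨c, ?_⟩
  rw [IsScalarTower.algebraMap_apply K K⟮ζ⟯ L, hc]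
  simp [g, map_zbarTerm, ζ']

theorem zbar_sum_weight_depth_height_rational_general (n : ℕ) (ζ : ℂ)
    (hζ : IsPrimitiveRoot ζ n) (k r s : ℕ) (hr : 1 ≤ r) :
    ∃ c : ℚ, ∑ a ∈ indexSet3 k r s, zbar n a ζ = (c : ℂ) := by
  rcases le_or_gt n 1 with hn | hn
  · exact ⟨0, by simp [zbar, z, msets_eq_empty_of_le_one hn hr]⟩
  have : NeZero n := ⟨by omega⟩
  obtain ⟨c, hc⟩ := sum_msets_indexSet3_mem_range_algebraMap (K := ℚ) hζ k r s
  refine ⟨c, ?_⟩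
  rw [sum_congr rfl fun a _ => zbar_eq_sum_prod_zbarTerm (hζ.ne_one hn) a, sum_comm, ← hc,
    eq_ratCast]

/-- the sum of `z̄_n(k; ζ_n)` over indices of fixed weight, depth and
height is rational. -/
theorem zbar_sum_weight_depth_height_rational (n : ℕ) (hn : 0 < n) (ζ : ℂ)
    (hζ : IsPrimitiveRoot ζ n) (k r s : ℕ) (hk : 1 ≤ k) (hr : 1 ≤ r)
    (hsr : s ≤ r) (hkrs : r + s ≤ k) :
    ∃ c : ℚ, ∑ a ∈ indexSet3 k r s, zbar n a ζ = (c : ℂ) :=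
  zbar_sum_weight_depth_height_rational_general n ζ hζ k r s hr
end

section
/- Let n be a positive integer and ζ_n a primitive n-th root of unity in ℂ. For all integers k ≥ 1, r ≥ 1, s ≥ 0 with r ≥ s and k ≥ r+s, the sum Σ_{k ∈ I(k,r,s)} z̄*_n(k; ζ_n) of the star values, taken over all indices of weight k, depth r, and height s, is a rational number. -/
open Finset

/-!
After absorbing the factors `(1 - ζ)⁻¹`, the sum is `∑_{n > m_1 ≥ … ≥ m_r > 0} F(ζ^{m_1}, …, ζ^{m_r})`
with `F` symmetric, since `I(k,r,s)` is stable under permuting entries. An automorphism of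
`ℚ(ζ)` sends `ζ` to `ζ^c` with `c` coprime to `n`; multiplication by `c` permutes the nonzero
residues mod `n`, and after re-sorting it permutes the weakly decreasing tuples `m`. So the sum
is fixed by the Galois group of `ℚ(ζ)/ℚ`, hence rational.
-/

lemma inv_one_sub_pow_mul_div_qint_pow {K : Type*} [Field K] (q : K) (a m : ℕ) :
    (1 - q)⁻¹ ^ a * (q ^ ((a - 1) * m) / ((1 - q ^ m) / (1 - q)) ^ a) =
      (q ^ m) ^ (a - 1) / (1 - q ^ m) ^ a := by
  rw [← pow_mul, mul_comm m]
  rcases eq_or_ne q 1 with rfl | hq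
  · cases a <;> simp
  · have : (1 - q) ^ a ≠ 0 := pow_ne_zero _ (sub_ne_zero.mpr hq.symm)
    rw [div_pow, div_div_eq_mul_div, inv_pow, ← mul_div_assoc, ← mul_assoc, mul_right_comm,
      inv_mul_cancel₀ this, one_mul]

noncomputable def indexSet3Sum {K : Type*} [Field K] (k s : ℕ) {r : ℕ} (x : Fin r → K) : K :=
  ∑ a ∈ indexSet3 k r s, ∏ i, x i ^ (a i - 1) / (1 - x i) ^ a i

noncomputable def zstarbarSum {K : Type*} [Field K] (n k r s : ℕ) (q : K) : K :=
  ∑ m ∈ msetsStar n r, indexSet3Sum k s fun i => q ^ (m i : ℕ)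

theorem sum_indexSet3_zstarbar (n k r s : ℕ) (q : ℂ) :
    ∑ a ∈ indexSet3 k r s, zstarbar n a q = zstarbarSum n k r s q := by
  simp only [zstarbarSum, indexSet3Sum, zstarbar, zstar, mul_sum]
  rw [sum_comm]
  refine sum_congr rfl fun m _ => sum_congr rfl fun a _ => ?_
  rw [← prod_pow_eq_pow_sum, ← prod_mul_distrib]
  exact prod_congr rfl fun i _ => inv_one_sub_pow_mul_div_qint_pow q (a i) (m i)

theorem comp_perm_mem_indexSet3_iff {k r s : ℕ} {a : Fin r → ℕ} (σ : Equiv.Perm (Fin r)) :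
    a ∘ σ ∈ indexSet3 k r s ↔ a ∈ indexSet3 k r s := by
  have hcard : #{i | 2 ≤ a (σ i)} = #{i | 2 ≤ a i} := card_equiv σ (by simp)
  simp only [indexSet3, mem_filter, Nat.mem_antidiagonalTuple, Function.comp_apply,
    Equiv.sum_comp, hcard, σ.forall_congr_right (q := fun i => 1 ≤ a i)]

theorem indexSet3Sum_comp_perm {K : Type*} [Field K] (k s : ℕ) {r : ℕ} (x : Fin r → K)
    (σ : Equiv.Perm (Fin r)) : indexSet3Sum k s (x ∘ σ) = indexSet3Sum k s x := by
  refine sum_nbij' (· ∘ σ.symm) (· ∘ σ) (fun a ha => ?_) (fun a ha => ?_)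
    (fun a _ => by simp [Function.comp_def]) (fun a _ => by simp [Function.comp_def])
    (fun a _ => ?_)
  · exact (comp_perm_mem_indexSet3_iff σ.symm).mpr ha
  · exact (comp_perm_mem_indexSet3_iff σ).mpr ha
  · simp only [Function.comp_apply]
    rw [← Equiv.prod_comp σ fun i => x i ^ (a (σ.symm i) - 1) / (1 - x i) ^ a (σ.symm i)]
    simp

theorem map_indexSet3Sum {K L : Type*} [Field K] [Field L] (f : K →+* L) (k s : ℕ) {r : ℕ}
    (x : Fin r → K) : f (indexSet3Sum k s x) = indexSet3Sum k s (f ∘ x) := by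
  simp [indexSet3Sum]

theorem map_zstarbarSum {K L : Type*} [Field K] [Field L] (f : K →+* L) (n k r s : ℕ) (q : K) :
    f (zstarbarSum n k r s q) = zstarbarSum n k r s (f q) := by
  simp [zstarbarSum, map_indexSet3Sum, Function.comp_def]

section AntitoneRearrangement

variable {α : Type*} [LinearOrder α] {r : ℕ}

def antitoneRearrangement (f : Fin r → α) : Fin r → α :=
  f ∘ Tuple.sort (OrderDual.toDual ∘ f)

theorem antitone_antitoneRearrangement (f : Fin r → α) : Antitone (antitoneRearrangement f) :=
  Tuple.monotone_sort (OrderDual.toDual ∘ f)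

theorem antitoneRearrangement_comp_perm {f : Fin r → α} (hf : Antitone f)
    (σ : Equiv.Perm (Fin r)) : antitoneRearrangement (f ∘ σ) = f :=
  Tuple.unique_antitone (σ := σ * Tuple.sort (OrderDual.toDual ∘ f ∘ σ)) (τ := 1)
    (antitone_antitoneRearrangement (f ∘ σ)) hf

theorem antitoneRearrangement_symm_comp_antitoneRearrangement {f : Fin r → α} (hf : Antitone f)
    (π : Equiv.Perm α) :
    antitoneRearrangement (π.symm ∘ antitoneRearrangement (π ∘ f)) = f := by
  have : π.symm ∘ antitoneRearrangement (π ∘ f) =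
      f ∘ Tuple.sort (OrderDual.toDual ∘ π ∘ f) := by
    ext i; simp [antitoneRearrangement]
  rw [this, antitoneRearrangement_comp_perm hf]

end AntitoneRearrangement

theorem mem_msetsStar_iff {n r : ℕ} {m : Fin r → Fin n} :
    m ∈ msetsStar n r ↔ Antitone m ∧ ∀ i, 0 < (m i : ℕ) := by
  simp [msetsStar, Antitone]

theorem antitoneRearrangement_comp_mem_msetsStar {n r : ℕ} {π : Equiv.Perm (Fin n)}
    (hπ : ∀ x, 0 < (π x : ℕ) ↔ 0 < (x : ℕ)) {m : Fin r → Fin n} (hm : m ∈ msetsStar n r) :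
    antitoneRearrangement (π ∘ m) ∈ msetsStar n r := by
  rw [mem_msetsStar_iff] at hm ⊢
  exact ⟨antitone_antitoneRearrangement _, fun i => (hπ _).mpr (hm.2 _)⟩

theorem sum_msetsStar_comp_perm {β : Type*} [AddCommMonoid β] {n r : ℕ}
    (π : Equiv.Perm (Fin n)) (hπ : ∀ x, 0 < (π x : ℕ) ↔ 0 < (x : ℕ))
    (F : (Fin r → Fin n) → β) (hF : ∀ m (σ : Equiv.Perm (Fin r)), F (m ∘ σ) = F m) :
    ∑ m ∈ msetsStar n r, F (π ∘ m) = ∑ m ∈ msetsStar n r, F m := by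
  have hπ_symm : ∀ x, 0 < (π.symm x : ℕ) ↔ 0 < (x : ℕ) := fun x => by
    simpa using (hπ (π.symm x)).symm
  refine sum_nbij' (fun m => antitoneRearrangement (π ∘ m))
    (fun m => antitoneRearrangement (π.symm ∘ m))
    (fun m hm => antitoneRearrangement_comp_mem_msetsStar hπ hm)
    (fun m hm => antitoneRearrangement_comp_mem_msetsStar hπ_symm hm)
    (fun m hm => antitoneRearrangement_symm_comp_antitoneRearrangement
      (mem_msetsStar_iff.mp hm).1 π)
    (fun m hm => by
      simpa using antitoneRearrangement_symm_comp_antitoneRearrangement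
        (mem_msetsStar_iff.mp hm).1 π.symm)
    (fun m _ => (hF _ _).symm)

section CoprimeMulPerm

variable {n : ℕ} (hn : 0 < n) {c : ℕ} (hc : c.Coprime n)

noncomputable def coprimeMulPerm : Equiv.Perm (Fin n) :=
  Equiv.ofBijective (fun x => ⟨c * x % n, Nat.mod_lt _ hn⟩) <|
    Finite.injective_iff_bijective.mp fun x y hxy =>
      Fin.ext <| (Nat.ModEq.cancel_left_of_coprime hc.symm (congrArg Fin.val hxy)).eq_of_lt_of_lt
        x.2 y.2

theorem coprimeMulPerm_val (x : Fin n) : (coprimeMulPerm hn hc x : ℕ) = c * x % n := rfl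

theorem coprimeMulPerm_pos_iff (x : Fin n) :
    0 < (coprimeMulPerm hn hc x : ℕ) ↔ 0 < (x : ℕ) := by
  rw [coprimeMulPerm_val, Nat.pos_iff_ne_zero, Nat.pos_iff_ne_zero, not_iff_not,
    ← Nat.dvd_iff_mod_eq_zero, hc.symm.dvd_mul_left]
  exact ⟨fun h => Nat.eq_zero_of_dvd_of_lt h x.2, fun h => h ▸ dvd_zero n⟩

theorem pow_coprimeMulPerm {M : Type*} [Monoid M] {ζ : M} (hζ : ζ ^ n = 1) (x : Fin n) :
    ζ ^ (coprimeMulPerm hn hc x : ℕ) = (ζ ^ c) ^ (x : ℕ) := by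
  rw [← pow_mul, coprimeMulPerm_val]
  exact pow_eq_pow_of_modEq (Nat.mod_modEq _ n) hζ

end CoprimeMulPerm

theorem zstarbarSum_pow_coprime {K : Type*} [Field K] {n : ℕ} (hn : 0 < n) {c : ℕ}
    (hc : c.Coprime n) {ζ : K} (hζ : ζ ^ n = 1) (k r s : ℕ) :
    zstarbarSum n k r s (ζ ^ c) = zstarbarSum n k r s ζ := by
  simp only [zstarbarSum, ← pow_coprimeMulPerm hn hc hζ]
  exact sum_msetsStar_comp_perm _ (coprimeMulPerm_pos_iff hn hc)
    (fun m => indexSet3Sum k s fun i => ζ ^ (m i : ℕ))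
    (fun m σ => indexSet3Sum_comp_perm k s (fun i => ζ ^ (m i : ℕ)) σ)

open IntermediateField in
theorem exists_rat_eq_zstarbarSum {L : Type*} [Field L] [CharZero L] {n : ℕ} (hn : 0 < n)
    {ζ : L} (hζ : IsPrimitiveRoot ζ n) (k r s : ℕ) : ∃ q : ℚ, zstarbarSum n k r s ζ = q := by
  have : NeZero n := ⟨hn.ne'⟩
  have : IsCyclotomicExtension {n} ℚ ℚ⟮ζ⟯ := by
    change IsCyclotomicExtension {n} ℚ ℚ⟮ζ⟯.toSubalgebra
    rw [adjoin_simple_toSubalgebra_of_isAlgebraic (hζ.isIntegral hn).tower_top.isAlgebraic]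
    exact hζ.adjoin_isCyclotomicExtension ℚ
  have := IsCyclotomicExtension.isGalois {n} ℚ ℚ⟮ζ⟯
  have := IsCyclotomicExtension.finiteDimensional {n} ℚ ℚ⟮ζ⟯
  set η := AdjoinSimple.gen ℚ ζ
  have hη : IsPrimitiveRoot η n :=
    IsPrimitiveRoot.of_map_of_injective (f := algebraMap ℚ⟮ζ⟯ L)
      (by rwa [AdjoinSimple.algebraMap_gen]) (algebraMap ℚ⟮ζ⟯ L).injective
  have hfixed : ∀ σ : Gal(ℚ⟮ζ⟯/ℚ), σ (zstarbarSum n k r s η) = zstarbarSum n k r s η := by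
    intro σ
    obtain ⟨c, -, hc, hση⟩ := hη.isPrimitiveRoot_iff.mp (hη.map_of_injective σ.injective)
    rw [← RingHom.coe_coe σ, map_zstarbarSum, RingHom.coe_coe, ← hση,
      zstarbarSum_pow_coprime hn hc hη.pow_eq_one]
  obtain ⟨q, hq⟩ := (IsGalois.mem_range_algebraMap_iff_fixed _).mpr hfixed
  refine ⟨q, ?_⟩
  rw [← AdjoinSimple.algebraMap_gen ℚ ζ, ← map_zstarbarSum, ← hq,
    ← IsScalarTower.algebraMap_apply, eq_ratCast]

theorem zstarbar_sum_weight_depth_height_rational_general (n : ℕ) (hn : 0 < n) (ζ : ℂ)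
    (hζ : IsPrimitiveRoot ζ n) (k r s : ℕ) :
    ∃ c : ℚ, ∑ a ∈ indexSet3 k r s, zstarbar n a ζ = (c : ℂ) := by
  rw [sum_indexSet3_zstarbar]
  exact exists_rat_eq_zstarbarSum hn hζ k r s

/-- the sum of `z̄*_n(k; ζ_n)` over indices of fixed weight, depth and
height is rational. -/
theorem zstarbar_sum_weight_depth_height_rational (n : ℕ) (hn : 0 < n) (ζ : ℂ)
    (hζ : IsPrimitiveRoot ζ n) (k r s : ℕ) (hk : 1 ≤ k) (hr : 1 ≤ r)
    (hsr : s ≤ r) (hkrs : r + s ≤ k) :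
    ∃ c : ℚ, ∑ a ∈ indexSet3 k r s, zstarbar n a ζ = (c : ℂ) :=
  zstarbar_sum_weight_depth_height_rational_general n hn ζ hζ k r s
end

section
/- Let n be a positive integer and ζ_n a primitive n-th root of unity in ℂ. In the ring of formal power series ℂ[[x]], one has (1 - (1+x)^n) · ( Σ_{k=1}^{∞} z̄_n(k; ζ_n) x^k ) = n·x + (1 - (1+x)^n); equivalently, Σ_{k=1}^{∞} z̄_n(k; ζ_n) x^k = n·x/(1-(1+x)^n) + 1. -/
open Finset

/-!
Since `z̄_n(k+1; q) = Σ_{0<m<n} q^{mk} / (1 - q^m)^{k+1}`, the generating series is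
`X · Σ_{0<m<n} 1 / (1 - ζ^m Y)` with `Y = 1 + X`. Each `1 - ζ^m Y` divides `1 - Y^n` with cofactor
the geometric sum `G_m = Σ_{k<n} (ζ^m Y)^k`, and `Σ_{m<n} G_m = n` by orthogonality of the
`n`-th roots of unity. Hence `(1 - Y^n) · Σ_{0<m<n} 1 / (1 - ζ^m Y) = n - G_0`, and
`X · G_0 = Y^n - 1` because `1 - Y = -X`.
-/

open PowerSeries

namespace PowerSeries

variable {R K : Type*} [CommRing R] [Field K]

theorem mk_ite_eq_zero_eq_X_mul (f : ℕ → R) :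
    mk (fun k => if k = 0 then 0 else f k) = X * mk fun k => f (k + 1) := by
  ext (_ | k) <;> simp [coeff_succ_X_mul]

theorem one_sub_C_mul_one_add_X_mul_mk {a : K} (ha : a ≠ 1) :
    (1 - C a * (1 + X)) * mk (fun k => a ^ k / (1 - a) ^ (k + 1)) = 1 := by
  have ha' : 1 - a ≠ 0 := sub_ne_zero.2 ha.symm
  have hsplit : (1 - C a * (1 + X) : K⟦X⟧) = C (1 - a) - X * C a := by
    simp only [map_sub, map_one]; ring
  ext (_ | k)
  · simp [hsplit, ha']
  · simp only [hsplit, sub_mul, mul_assoc, map_sub, coeff_C_mul, coeff_succ_X_mul, coeff_mk,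
      coeff_one, Nat.succ_ne_zero, if_false]
    field_simp
    ring

end PowerSeries

theorem mul_neg_geom_sum_mul_of_pow_eq_one {R : Type*} [CommRing R] {ζ : R} {n : ℕ}
    (hζ : ζ ^ n = 1) (y : R) :
    (1 - ζ * y) * ∑ k ∈ range n, (ζ * y) ^ k = 1 - y ^ n := by
  rw [mul_neg_geom_sum, mul_pow, hζ, one_mul]

namespace IsPrimitiveRoot

variable {R : Type*} [CommRing R] [IsDomain R] {ζ : R} {n : ℕ}

theorem geom_sum_pow_eq_zero (hζ : IsPrimitiveRoot ζ n) {k : ℕ} (hk : ¬n ∣ k) :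
    ∑ m ∈ range n, (ζ ^ k) ^ m = 0 := by
  have hne : 1 - ζ ^ k ≠ 0 := sub_ne_zero.2 fun h => hk ((hζ.pow_eq_one_iff_dvd k).1 h.symm)
  have h := mul_neg_geom_sum (ζ ^ k) n
  rw [pow_right_comm, hζ.pow_eq_one, one_pow, sub_self] at h
  exact (mul_eq_zero.1 h).resolve_left hne

theorem sum_geom_sum_pow_mul (hζ : IsPrimitiveRoot ζ n) (y : R) :
    ∑ m ∈ range n, ∑ k ∈ range n, (ζ ^ m * y) ^ k = n := by
  have hterm (k : ℕ) :
      ∑ m ∈ range n, (ζ ^ m * y) ^ k = (∑ m ∈ range n, (ζ ^ k) ^ m) * y ^ k := by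
    simp only [sum_mul, mul_pow, ← pow_mul, mul_comm k]
  have hvanish : ∀ k ∈ range n, k ≠ 0 → (∑ m ∈ range n, (ζ ^ k) ^ m) * y ^ k = 0 :=
    fun k hk hk0 => by
      rw [hζ.geom_sum_pow_eq_zero (Nat.not_dvd_of_pos_of_lt (Nat.pos_of_ne_zero hk0)
        (mem_range.1 hk)), zero_mul]
  rw [sum_comm, sum_congr rfl fun k _ => hterm k, sum_eq_single 0 hvanish (fun h => by simp_all)]
  simp

end IsPrimitiveRoot

theorem z_fin_one (n k : ℕ) (q : ℂ) :
    z n (fun _ : Fin 1 => k) q =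
      ∑ m ∈ Ico 1 n, q ^ ((k - 1) * m) / ((1 - q ^ m) / (1 - q)) ^ k := by
  refine sum_bij' (fun m _ => (m 0 : ℕ)) (fun a ha _ => ⟨a, (mem_Ico.1 ha).2⟩) ?_ ?_ ?_ ?_ ?_
  · intro m hm
    simp only [msets, mem_filter, mem_univ, true_and] at hm
    exact mem_Ico.2 ⟨hm.2 0, (m 0).2⟩
  · intro a ha
    simp only [msets, mem_filter, mem_univ, true_and]
    exact ⟨fun i j hij => absurd (Subsingleton.elim i j) hij.ne, fun _ => (mem_Ico.1 ha).1⟩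
  · intro m _
    funext i
    rw [Subsingleton.elim i 0]
  · intro a _
    rfl
  · intro m _
    rw [Fin.prod_univ_one]

theorem zbar_fin_one_succ {n : ℕ} {q : ℂ} (hq : ∀ m ∈ Ico 1 n, q ^ m ≠ 1) (k : ℕ) :
    zbar n (fun _ : Fin 1 => k + 1) q = ∑ m ∈ Ico 1 n, (q ^ m) ^ k / (1 - q ^ m) ^ (k + 1) := by
  simp only [zbar, z_fin_one, Fin.sum_univ_one, mul_sum, Nat.add_sub_cancel, div_pow,
    div_div_eq_mul_div, inv_pow, ← pow_mul, mul_comm k]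
  refine sum_congr rfl fun m hm => ?_
  have hq1 : 1 - q ≠ 0 := sub_ne_zero.2 fun h =>
    hq 1 (mem_Ico.2 ⟨le_rfl, (mem_Ico.1 hm).1.trans_lt (mem_Ico.1 hm).2⟩) (by rw [← h, pow_one])
  field_simp

theorem mk_zbar_fin_one {n : ℕ} {q : ℂ} (hq : ∀ m ∈ Ico 1 n, q ^ m ≠ 1) :
    mk (fun k => if k = 0 then 0 else zbar n (fun _ : Fin 1 => k) q) =
      X * ∑ m ∈ Ico 1 n, mk fun k => (q ^ m) ^ k / (1 - q ^ m) ^ (k + 1) := by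
  rw [mk_ite_eq_zero_eq_X_mul]
  congr 1
  ext k
  simp [zbar_fin_one_succ hq, map_sum]

/-- `(1 - (1+x)^n)·(Σ_{k≥1} z̄_n(k;ζ_n) x^k) = n·x + (1 - (1+x)^n)`
in `ℂ[[x]]`, i.e. `Σ_{k≥1} z̄_n(k;ζ_n) x^k = n·x/(1-(1+x)^n) + 1`. -/
theorem zbar_depth_one_generating_function (n : ℕ) (hn : 0 < n) (ζ : ℂ)
    (hζ : IsPrimitiveRoot ζ n) :
    (1 - (1 + PowerSeries.X) ^ n) *
        (PowerSeries.mk fun k => if k = 0 then (0 : ℂ)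
          else zbar n (fun _ : Fin 1 => k) ζ) =
      PowerSeries.C (n : ℂ) * PowerSeries.X + (1 - (1 + PowerSeries.X) ^ n) := by
  have hζm : ∀ m ∈ Ico 1 n, ζ ^ m ≠ 1 := fun m hm =>
    hζ.pow_ne_one_of_pos_of_lt (Nat.one_le_iff_ne_zero.1 (mem_Ico.1 hm).1) (mem_Ico.1 hm).2
  set Y : ℂ⟦X⟧ := 1 + X
  set G : ℕ → ℂ⟦X⟧ := fun m => ∑ k ∈ range n, (C ζ ^ m * Y) ^ k
  have hG (m : ℕ) : (1 - C ζ ^ m * Y) * G m = 1 - Y ^ n :=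
    mul_neg_geom_sum_mul_of_pow_eq_one
      (by rw [← map_pow, ← map_pow, pow_right_comm, hζ.pow_eq_one, one_pow, map_one]) Y
  have hsumG : G 0 + ∑ m ∈ Ico 1 n, G m = n := by
    rw [← sum_eq_sum_Ico_succ_bot hn, ← range_eq_Ico]
    exact (hζ.map_of_injective C_injective).sum_geom_sum_pow_mul Y
  have hG0 : X * G 0 = Y ^ n - 1 := by
    simpa [Y] using congrArg Neg.neg (hG 0)
  have hterm : ∀ m ∈ Ico 1 n,
      (1 - Y ^ n) * mk (fun k => (ζ ^ m) ^ k / (1 - ζ ^ m) ^ (k + 1)) = G m := fun m hm => by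
    rw [← hG, mul_comm (1 - _), mul_assoc, ← map_pow, one_sub_C_mul_one_add_X_mul_mk (hζm m hm),
      mul_one]
  rw [mk_zbar_fin_one hζm, mul_left_comm, mul_sum, sum_congr rfl hterm, map_natCast]
  linear_combination X * hsumG - hG0
end

section
/- Let n be a positive integer and q a complex number with q^m ≠ 1 for all 0 < m < n. For every index (k_1,...,k_r) of positive integers, Σ_{n > m_1 > ... > m_r > 0} Π_{i=1}^r 1/(1-q^{m_i})^{k_i} = Σ_{a_1=1}^{k_1} ... Σ_{a_r=1}^{k_r} ( Π_{j=1}^r binom(k_j - 1, a_j - 1) ) · Σ_{n > m_1 > ... > m_r > 0} Π_{i=1}^r q^{(a_i-1)m_i}/(1-q^{m_i})^{a_i}. -/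
open Finset

lemma key_binom_expand (x : ℂ) (hx : 1 - x ≠ 0) (k : ℕ) (hk : 1 ≤ k) :
    ∑ a ∈ Finset.Icc 1 k, ((k-1).choose (a-1) : ℂ) * (x ^ (a-1) / (1-x)^a)
      = 1 / (1-x)^k := by
  have h1 : (∑ b ∈ Finset.range k, x ^ b * (1-x)^(k-1-b) * ((k-1).choose b : ℂ)) = 1 := by
    have h := add_pow x (1-x) (k-1)
    rw [show x + (1-x) = (1:ℂ) by ring, one_pow, Nat.sub_add_cancel hk] at h
    exact h.symm
  have hre : ∑ a ∈ Finset.Icc 1 k, ((k-1).choose (a-1) : ℂ) * (x ^ (a-1) / (1-x)^a)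
      = ∑ b ∈ Finset.range k, x ^ b * (1-x)^(k-1-b) * ((k-1).choose b : ℂ) / (1-x)^k := by
    refine Finset.sum_nbij' (fun a => a - 1) (fun b => b + 1) ?_ ?_ ?_ ?_ ?_
    · intro a ha; rw [Finset.mem_Icc] at ha; simp only [Finset.mem_range]; omega
    · intro b hb; rw [Finset.mem_range] at hb; simp only [Finset.mem_Icc]; omega
    · intro a ha; rw [Finset.mem_Icc] at ha; omega
    · intro b hb; omega
    · intro a ha
      rw [Finset.mem_Icc] at ha
      rw [← mul_div_assoc, div_eq_div_iff (pow_ne_zero _ hx) (pow_ne_zero _ hx)]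
      rw [show (1-x)^k = (1-x)^(k-1-(a-1)) * (1-x)^a from by
        rw [← pow_add]; congr 1; omega]
      ring
  rw [hre, ← Finset.sum_div, h1]

set_option maxHeartbeats 1000000

/-- binomial expansion of the finite q-multiple polylogarithm at `t=1`
in terms of the modified finite multiple harmonic q-series. -/
theorem Lpoly_one_eq_sum_zbar (n : ℕ) (hn : 0 < n) (q : ℂ)
    (hq : ∀ m : ℕ, 0 < m → m < n → q ^ m ≠ 1)
    (r : ℕ) (k : Fin r → ℕ) (hk : ∀ i, 1 ≤ k i) :
    (∑ m ∈ msets n r, ∏ i, 1 / (1 - q ^ (m i : ℕ)) ^ (k i)) =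
      ∑ a ∈ Fintype.piFinset (fun i => Finset.Icc 1 (k i)),
        (∏ j, ((k j - 1).choose (a j - 1) : ℂ)) *
          ∑ m ∈ msets n r,
            ∏ i, q ^ ((a i - 1) * (m i : ℕ)) / (1 - q ^ (m i : ℕ)) ^ (a i) := by
  symm
  calc ∑ a ∈ Fintype.piFinset (fun i => Finset.Icc 1 (k i)),
        (∏ j, ((k j - 1).choose (a j - 1) : ℂ)) *
          ∑ m ∈ msets n r, ∏ i, q ^ ((a i - 1) * (m i : ℕ)) / (1 - q ^ (m i : ℕ)) ^ (a i)
      = ∑ m ∈ msets n r, ∑ a ∈ Fintype.piFinset (fun i => Finset.Icc 1 (k i)),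
          ∏ i, ((k i - 1).choose (a i - 1) : ℂ) *
            (q ^ ((a i - 1) * (m i : ℕ)) / (1 - q ^ (m i : ℕ)) ^ (a i)) := by
        rw [Finset.sum_comm]
        refine Finset.sum_congr rfl fun a _ => ?_
        rw [Finset.mul_sum]
        refine Finset.sum_congr rfl fun m _ => ?_
        rw [← Finset.prod_mul_distrib]
    _ = ∑ m ∈ msets n r, ∏ i, 1 / (1 - q ^ (m i : ℕ)) ^ (k i) := by
        refine Finset.sum_congr rfl fun m hm => ?_
        rw [msets, Finset.mem_filter] at hm
        calc (∑ a ∈ Fintype.piFinset fun i => Finset.Icc 1 (k i),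
                ∏ i : Fin r, ((k i - 1).choose (a i - 1) : ℂ) *
                  (q ^ ((a i - 1) * ((m i : ℕ))) / (1 - q ^ ((m i : ℕ))) ^ (a i)))
            = ∏ i : Fin r, ∑ a ∈ Finset.Icc 1 (k i), ((k i - 1).choose (a - 1) : ℂ) *
                  (q ^ ((a - 1) * ((m i : ℕ))) / (1 - q ^ ((m i : ℕ))) ^ a) :=
              (Finset.prod_univ_sum (fun i => Finset.Icc 1 (k i))
                (fun i a => ((k i - 1).choose (a - 1) : ℂ) *
                  (q ^ ((a - 1) * ((m i : ℕ))) / (1 - q ^ ((m i : ℕ))) ^ a))).symm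
          _ = ∏ i, 1 / (1 - q ^ (m i : ℕ)) ^ (k i) := by
              refine Finset.prod_congr rfl fun i _ => ?_
              have hmi : 0 < (m i : ℕ) := hm.2.2 i
              have hx : 1 - q ^ (m i : ℕ) ≠ 0 := by
                rw [sub_ne_zero]
                exact fun h => hq _ hmi (m i).isLt h.symm
              rw [← key_binom_expand (q ^ (m i : ℕ)) hx (k i) (hk i)]
              refine Finset.sum_congr rfl fun a _ => ?_
              rw [← pow_mul, mul_comm ((m i : ℕ))]
end

section
/- Let n be a positive integer, q a complex number with q^m ≠ 1 for all 0 < m < n, and let L_{k}(t) = L_{k_1,...,k_r}^{(n)}(t; q) = Σ_{n > m_1 > ... > m_r > 0} t^{m_1} / Π_{i=1}^r (1-q^{m_i})^{k_i} (a polynomial in t), with the convention L_∅(t) = 1 for the empty index. Then for every complex number t ≠ 0: (i) if k_1 ≥ 2, then (L_{k_1,...,k_r}(t) - L_{k_1,...,k_r}(qt))/t = (1/t) · L_{k_1-1, k_2,...,k_r}(t); (ii) if k_1 = 1 and t ≠ 1, then (L_{1,k_2,...,k_r}(t) - L_{1,k_2,...,k_r}(qt))/t = (1/(1-t)) · ( L_{k_2,...,k_r}(t)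 - t^{n-1} L_{k_2,...,k_r}(1) ). -/
open Finset

namespace QAux

noncomputable def P (q : ℂ) {n r : ℕ} (w : Fin r → ℕ) (m : Fin r → Fin n) : ℂ :=
  ∏ i, 1 / (1 - q ^ (m i : ℕ)) ^ (w i)

noncomputable def S (n : ℕ) (q : ℂ) {r : ℕ} (w : Fin r → ℕ) (a : ℕ) : ℂ :=
  ∑ m ∈ (msets n r).filter (fun m => ∀ i, (m i : ℕ) < a), P q w m

lemma mem_msets {n r : ℕ} {m : Fin r → Fin n} :
    m ∈ msets n r ↔ (∀ i j : Fin r, i < j → m j < m i) ∧ ∀ i, 0 < (m i : ℕ) := by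
  simp [msets]

lemma le_head {n r : ℕ} {m : Fin (r+1) → Fin n} (hm : m ∈ msets n (r+1)) (i : Fin (r+1)) :
    m i ≤ m 0 := by
  rcases mem_msets.mp hm with ⟨hdec, -⟩
  rcases eq_or_ne i 0 with h | h
  · simp [h]
  · exact (hdec 0 i (Fin.pos_iff_ne_zero.mpr h)).le

lemma shift_sum (g : ℕ → ℂ) : ∀ n : ℕ, 1 ≤ n →
    (∑ a ∈ Ioo 0 n, g (a+1)) + g 1 = (∑ a ∈ Ioo 0 n, g a) + g n := by
  intro n
  induction n with
  | zero => intro h; omega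
  | succ n ih =>
    intro _
    rcases Nat.eq_zero_or_pos n with h0 | h1
    · subst h0
      rw [show Ioo 0 1 = (∅ : Finset ℕ) from rfl]
      simp
    · have hIoo : Ioo 0 (n+1) = insert n (Ioo 0 n) := by
        rw [Finset.Ioo_insert_right h1]; rfl
      rw [hIoo, Finset.sum_insert (by simp), Finset.sum_insert (by simp)]
      linear_combination ih h1

lemma lpoly_eq (n : ℕ) (hn : 0 < n) (q : ℂ) {r : ℕ} (k : Fin (r+1) → ℕ) (t : ℂ) :
    Lpoly n k q t =
      ∑ a ∈ Ioo 0 n, t ^ a / (1 - q ^ a) ^ (k 0) * S n q (fun i => k i.succ) a := by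
  unfold Lpoly S
  have : ∀ a ∈ Ioo 0 n,
      t ^ a / (1 - q ^ a) ^ (k 0) *
        (∑ m ∈ (msets n r).filter (fun m => ∀ i, (m i : ℕ) < a), P q (fun i => k i.succ) m)
      = ∑ m ∈ (msets n r).filter (fun m => ∀ i, (m i : ℕ) < a),
          t ^ a / (1 - q ^ a) ^ (k 0) * P q (fun i => k i.succ) m :=
    fun a _ => Finset.mul_sum _ _ _
  rw [Finset.sum_congr rfl this, Finset.sum_sigma']
  refine Finset.sum_nbij' (fun m => ⟨(m 0 : ℕ), fun j => m j.succ⟩)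
    (fun p => Fin.cons ⟨p.1 % n, Nat.mod_lt _ hn⟩ p.2) ?_ ?_ ?_ ?_ ?_
  · intro m hm
    obtain ⟨hdec, hpos⟩ := mem_msets.mp hm
    simp only [Finset.mem_sigma, Finset.mem_Ioo, Finset.mem_filter, Finset.mem_univ, true_and]
    refine ⟨⟨hpos 0, (m 0).isLt⟩, mem_msets.mpr ⟨fun i j hij => hdec i.succ j.succ (by simpa), fun i => hpos i.succ⟩, fun i => hdec 0 i.succ (Fin.succ_pos i)⟩
  · intro p hp
    simp only [Finset.mem_sigma, Finset.mem_Ioo, Finset.mem_filter, Finset.mem_univ, true_and] at hp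
    obtain ⟨⟨hp0, hpn⟩, hmem, hlt⟩ := hp
    obtain ⟨hdec, hpos⟩ := mem_msets.mp hmem
    have hmod : p.1 % n = p.1 := Nat.mod_eq_of_lt hpn
    refine mem_msets.mpr ⟨?_, ?_⟩
    · intro i j hij
      induction j using Fin.cases with
      | zero => exact absurd hij (by simp [Fin.lt_def])
      | succ j' =>
        induction i using Fin.cases with
        | zero =>
          simp only [Fin.cons_succ, Fin.cons_zero, Fin.lt_def, hmod]
          exact hlt j'
        | succ i' =>
          simp only [Fin.cons_succ]
          exact hdec i' j' (by simpa using hij)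
    · intro i
      refine Fin.cases ?_ ?_ i
      · simpa [hmod] using hp0
      · intro i'; simpa using hpos i'
  · intro m hm
    obtain ⟨-, hpos⟩ := mem_msets.mp hm
    funext i
    refine Fin.cases ?_ ?_ i
    · simp only [Fin.cons_zero]
      exact Fin.ext (Nat.mod_eq_of_lt (m 0).isLt)
    · intro i'; simp
  · intro p hp
    simp only [Finset.mem_sigma, Finset.mem_Ioo] at hp
    refine Sigma.ext ?_ ?_
    · simpa using Nat.mod_eq_of_lt hp.1.2
    · simp
  · intro m hm
    unfold P
    rw [Fin.prod_univ_succ]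
    simp [Fin.val_succ]

lemma S_succ (n : ℕ) (q : ℂ) {r : ℕ} (w : Fin (r+1) → ℕ) (a : ℕ) :
    S n q w (a+1) = S n q w a
      + ∑ m ∈ (msets n (r+1)).filter (fun m => (m 0 : ℕ) = a), P q w m := by
  unfold S
  rw [Finset.sum_filter, Finset.sum_filter, Finset.sum_filter, ← Finset.sum_add_distrib]
  refine Finset.sum_congr rfl fun m hm => ?_
  have hle : ∀ i : Fin (r+1), (m i : ℕ) ≤ (m 0 : ℕ) := fun i => le_head hm i
  by_cases h0 : (m 0 : ℕ) = a
  · rw [if_pos (fun i => by have := hle i; omega),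
      if_neg (fun h => by have := h 0; omega), if_pos h0, zero_add]
  · rw [if_neg h0, add_zero]
    by_cases h1 : ∀ i, (m i : ℕ) < a
    · rw [if_pos (fun i => by have := h1 i; omega), if_pos h1]
    · have hna : ¬ (∀ i, (m i : ℕ) < a + 1) := by
        intro h
        push_neg at h1
        obtain ⟨i, hi⟩ := h1
        have := hle i
        have := h 0
        omega
      rw [if_neg hna, if_neg h1]

lemma lpoly_fiber (n : ℕ) (hn : 0 < n) (q : ℂ) {r : ℕ} (w : Fin (r+1) → ℕ) (t : ℂ) :
    Lpoly n w q t = ∑ a ∈ Ioo 0 n,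
      t ^ a * ∑ m ∈ (msets n (r+1)).filter (fun m => (m 0 : ℕ) = a), P q w m := by
  have hmaps : ∀ m ∈ msets n (r+1), (m 0 : ℕ) ∈ Ioo 0 n := by
    intro m hm
    exact Finset.mem_Ioo.mpr ⟨(mem_msets.mp hm).2 0, (m 0).isLt⟩
  rw [show (∑ a ∈ Ioo 0 n, t ^ a *
        ∑ m ∈ (msets n (r+1)).filter (fun m => (m 0 : ℕ) = a), P q w m)
      = ∑ a ∈ Ioo 0 n, ∑ m ∈ (msets n (r+1)).filter (fun m => (m 0 : ℕ) = a),
          t ^ (m 0 : ℕ) * P q w m from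
    Finset.sum_congr rfl fun a _ => by
      rw [Finset.mul_sum]
      exact Finset.sum_congr rfl fun m hm => by
        rw [(Finset.mem_filter.mp hm).2]]
  rw [Finset.sum_fiberwise_of_maps_to hmaps]
  unfold Lpoly P
  refine Finset.sum_congr rfl fun m hm => ?_
  rw [Fin.prod_univ_succ, Fin.prod_univ_succ]
  simp only [Fin.val_succ, Fin.val_zero, if_pos, Nat.succ_ne_zero, if_neg, if_true, reduceIte]
  ring

lemma S_zero_depth (n : ℕ) (q : ℂ) (w : Fin 0 → ℕ) (a : ℕ) : S n q w a = 1 := by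
  unfold S P
  rw [Finset.filter_true_of_mem (fun m _ i => i.elim0)]
  rw [show msets n 0 = Finset.univ from
    Finset.filter_true_of_mem (fun m _ => ⟨fun i _ _ => i.elim0, fun i => i.elim0⟩)]
  simp

lemma lpoly_zero_depth (n : ℕ) (q t : ℂ) (w : Fin 0 → ℕ) : Lpoly n w q t = 1 := by
  unfold Lpoly
  rw [show msets n 0 = Finset.univ from
    Finset.filter_true_of_mem (fun m _ => ⟨fun i _ _ => i.elim0, fun i => i.elim0⟩)]
  simp

lemma S_one (n : ℕ) (q : ℂ) {r : ℕ} (w : Fin (r+1) → ℕ) : S n q w 1 = 0 := by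
  unfold S
  rw [Finset.filter_false_of_mem, Finset.sum_empty]
  intro m hm h
  have := (mem_msets.mp hm).2 0
  have := h 0
  omega

lemma S_top (n : ℕ) (q : ℂ) {r : ℕ} (w : Fin r → ℕ) :
    S n q w n = ∑ m ∈ msets n r, P q w m := by
  unfold S
  rw [Finset.filter_true_of_mem (fun m _ i => (m i).isLt)]

lemma lpoly_one (n : ℕ) (q : ℂ) {r : ℕ} (w : Fin r → ℕ) :
    Lpoly n w q 1 = ∑ m ∈ msets n r, P q w m := by
  unfold Lpoly P
  exact Finset.sum_congr rfl fun m _ => Finset.prod_congr rfl fun i _ => by simp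

end QAux


/-- the q-difference equations for the finite q-multiple
polylogarithms. -/
theorem Lpoly_q_difference (n : ℕ) (hn : 0 < n) (q : ℂ)
    (hq : ∀ m : ℕ, 0 < m → m < n → q ^ m ≠ 1)
    (r : ℕ) (k : Fin (r + 1) → ℕ) (hk : ∀ i, 1 ≤ k i) (t : ℂ) (ht : t ≠ 0) :
    (2 ≤ k 0 →
      (Lpoly n k q t - Lpoly n k q (q * t)) / t =
        (1 / t) * Lpoly n (Function.update k 0 (k 0 - 1)) q t) ∧
    (k 0 = 1 → t ≠ 1 →
      (Lpoly n k q t - Lpoly n k q (q * t)) / t =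
        (1 / (1 - t)) * (Lpoly n (fun i : Fin r => k i.succ) q t -
          t ^ (n - 1) * Lpoly n (fun i : Fin r => k i.succ) q 1)) := by
  constructor
  · intro hk2
    have key : Lpoly n k q t - Lpoly n k q (q * t)
        = Lpoly n (Function.update k 0 (k 0 - 1)) q t := by
      unfold Lpoly
      rw [← Finset.sum_sub_distrib]
      refine Finset.sum_congr rfl fun m hm => ?_
      have hpos := (QAux.mem_msets.mp hm).2 0
      have hD : (1 : ℂ) - q ^ (m 0 : ℕ) ≠ 0 :=
        sub_ne_zero_of_ne (Ne.symm (hq _ hpos (m 0).isLt))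
      rw [Fin.prod_univ_succ, Fin.prod_univ_succ, Fin.prod_univ_succ]
      simp only [Fin.val_zero, Fin.val_succ, Nat.succ_ne_zero, ite_false, ite_true,
        Function.update_apply, Fin.succ_ne_zero, if_neg, if_pos, reduceIte,
          Function.update_self]
      rw [← sub_mul]
      congr 1
      obtain ⟨e, he⟩ : ∃ e, k 0 = e + 1 := ⟨k 0 - 1, by omega⟩
      rw [he, Nat.add_sub_cancel, mul_pow, pow_succ]
      field_simp
    rw [key, div_eq_mul_inv, one_div, mul_comm]
  · intro hk0 ht1
    set w : Fin r → ℕ := fun i => k i.succ with hw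
    have h1t : (1 : ℂ) - t ≠ 0 := sub_ne_zero_of_ne (Ne.symm ht1)
    have hG : Lpoly n k q t - Lpoly n k q (q * t)
        = ∑ a ∈ Ioo 0 n, t ^ a * QAux.S n q w a := by
      rw [QAux.lpoly_eq n hn q k t, QAux.lpoly_eq n hn q k (q * t), ← Finset.sum_sub_distrib]
      refine Finset.sum_congr rfl fun a ha => ?_
      obtain ⟨ha0, han⟩ := Finset.mem_Ioo.mp ha
      have hqa : (1 : ℂ) - q ^ a ≠ 0 := sub_ne_zero_of_ne (Ne.symm (hq a ha0 han))
      rw [hk0, pow_one, mul_pow, ← sub_mul]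
      congr 1
      field_simp
    have hE2 : (1 - t) * (∑ a ∈ Ioo 0 n, t ^ a * QAux.S n q w a)
        = t * Lpoly n w q t - t ^ n * Lpoly n w q 1 := by
      cases r with
      | zero =>
        simp only [QAux.S_zero_depth, QAux.lpoly_zero_depth, mul_one]
        have e1 : ∑ a ∈ Finset.range n, t ^ a = 1 + ∑ a ∈ Ioo 0 n, t ^ a := by
          rw [Finset.range_eq_Ico, ← Finset.Ioo_insert_left hn, Finset.sum_insert (by simp)]
          simp
        have e2 := geom_sum_mul t n
        linear_combination (t - 1) * e1 - e2
      | succ r' =>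
        have hBt' : t * Lpoly n w q t
            = (∑ a ∈ Ioo 0 n, t ^ (a + 1) * QAux.S n q w (a + 1))
              - ∑ a ∈ Ioo 0 n, t ^ (a + 1) * QAux.S n q w a := by
          rw [QAux.lpoly_fiber n hn q w t, Finset.mul_sum, ← Finset.sum_sub_distrib]
          refine Finset.sum_congr rfl fun a _ => ?_
          rw [show (∑ m ∈ (msets n (r' + 1)).filter (fun m => (m 0 : ℕ) = a), QAux.P q w m)
            = QAux.S n q w (a + 1) - QAux.S n q w a from by rw [QAux.S_succ]; ring, pow_succ]
          ring
        have hshift := QAux.shift_sum (fun a => t ^ a * QAux.S n q w a) n hn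
        have hS1 : QAux.S n q w 1 = 0 := QAux.S_one n q w
        have hSn : QAux.S n q w n = Lpoly n w q 1 := by
          rw [QAux.S_top, QAux.lpoly_one]
        have hGt : t * (∑ a ∈ Ioo 0 n, t ^ a * QAux.S n q w a)
            = ∑ a ∈ Ioo 0 n, t ^ (a + 1) * QAux.S n q w a := by
          rw [Finset.mul_sum]
          exact Finset.sum_congr rfl fun a _ => by rw [pow_succ]; ring
        linear_combination -hGt - hBt' - hshift - t ^ n * hSn + t * hS1
    have hn1 : t ^ n = t * t ^ (n - 1) := by
      rw [← pow_succ']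
      congr 1
      omega
    rw [hG, div_eq_iff ht]
    apply mul_left_cancel₀ h1t
    rw [hE2]
    field_simp
    linear_combination -Lpoly n w q 1 * hn1
end
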